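/- arXiv:1906.08818 — 13 statements merged into one kernel-verified Lean document; each statement's English description precedes it below -/
import Mathlib

section
/- Let k be a field of characteristic ≠ 2 and g ∈ k[u] a nonconstant polynomial. Suppose the Pell equation x² − g·y² = 1 has a nontrivial solution in k[u]. Then there exists a fundamental solution (φ₁, ψ₁) with ψ₁ ≠ 0 such that every solution (φ, ψ) ∈ k[u]² of φ² − g·ψ² = 1 satisfies, in the ring A_g = k[u][w]/(w² − g), the identity φ + ψ·w = ε·(φ₁ + ψ₁·w)ⁿ or φ + ψ·w = ε·(φ₁ − ψ₁·w)ⁿ for some natural number n and some sign ε ∈ {1, −1}. -/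
open Polynomial

/-- The ring `A_g = k[u][w]/(w² − g)`. -/
noncomputable abbrev PellRing {k : Type*} [Field k] (g : Polynomial k) :=
  AdjoinRoot ((X : Polynomial (Polynomial k)) ^ 2 - C g)

/-- The element `a + b·w` of `A_g = k[u][w]/(w² − g)`. -/
noncomputable def pellElem {k : Type*} [Field k] (g a b : Polynomial k) :
    PellRing g :=
  AdjoinRoot.of _ a + AdjoinRoot.of _ b * AdjoinRoot.root _

/-!
Choose a nontrivial solution `(φ₁, ψ₁)` with `deg ψ₁` minimal and write `u = φ₁ + ψ₁·w`, a unit of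
`A_g` with inverse `φ₁ − ψ₁·w`. For a nontrivial solution `(φ, ψ)`, comparing leading coefficients
in `φ² = 1 + gψ²` and `φ₁² = 1 + gψ₁²` shows that after replacing `ψ₁` by `±ψ₁` the leading terms of
`ψφ₁` and `φψ₁` agree. Then `(φ + ψw)(φ₁ − ψ₁w)` is again a solution, and its `w`-coordinate
`y = ψφ₁ − φψ₁` satisfies `y·(ψφ₁ + φψ₁) = ψ² − ψ₁²`; the second factor has degree
`deg ψ + deg φ₁` (its leading coefficient is doubled, and `2 ≠ 0`), and `deg φ₁ > 0`, so
`deg y < deg ψ`. Descending on `deg ψ` we reach a solution with `ψ = 0`, i.e. `φ = ±1`.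
-/

section

variable {k : Type*} [Field k] {g x y φ₁ ψ₁ φ ψ : k[X]}

theorem PellRing.root_sq (g : k[X]) :
    AdjoinRoot.root (X ^ 2 - C g) ^ 2 = AdjoinRoot.of (X ^ 2 - C g) g := by
  have h := AdjoinRoot.mk_self (f := (X : k[X][X]) ^ 2 - C g)
  rwa [map_sub, map_pow, AdjoinRoot.mk_X, AdjoinRoot.mk_C, sub_eq_zero] at h

theorem pellElem_mul (a b a' b' : k[X]) :
    pellElem g a b * pellElem g a' b' = pellElem g (a * a' + g * (b * b')) (a * b' + b * a') := by
  simp only [pellElem, map_add, map_mul]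
  linear_combination (AdjoinRoot.of _ b * AdjoinRoot.of _ b') * PellRing.root_sq g

theorem pellElem_zero_right (a : k[X]) : pellElem g a 0 = AdjoinRoot.of _ a := by
  simp [pellElem]

theorem pellElem_eq_one_or_eq_neg_one {a : k[X]} (h : a ^ 2 = 1) :
    pellElem g a 0 = 1 ∨ pellElem g a 0 = -1 := by
  rcases sq_eq_one_iff.mp h with rfl | rfl <;> simp [pellElem_zero_right]

/-- Brahmagupta's identity: the norm `a² − g b²` is multiplicative. -/
theorem pell_mul {a b a' b' : k[X]} (h : a ^ 2 - g * b ^ 2 = 1) (h' : a' ^ 2 - g * b' ^ 2 = 1) :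
    (a * a' + g * (b * b')) ^ 2 - g * (a * b' + b * a') ^ 2 = 1 := by
  linear_combination (a' ^ 2 - g * b' ^ 2) * h + h'

theorem pellElem_mul_pellElem_neg {a b : k[X]} (h : a ^ 2 - g * b ^ 2 = 1) :
    pellElem g a b * pellElem g a (-b) = 1 := by
  have h₁ : pellElem g a b * pellElem g a (-b) = pellElem g 1 0 := by
    rw [pellElem_mul]
    congr 1
    · linear_combination h
    · ring
  rw [h₁, pellElem_zero_right, map_one]

noncomputable def pellUnit {a b : k[X]} (h : a ^ 2 - g * b ^ 2 = 1) : (PellRing g)ˣ where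
  val := pellElem g a b
  inv := pellElem g a (-b)
  val_inv := pellElem_mul_pellElem_neg h
  inv_val := by rw [mul_comm]; exact pellElem_mul_pellElem_neg h

@[simp]
theorem val_pellUnit {a b : k[X]} (h : a ^ 2 - g * b ^ 2 = 1) :
    (pellUnit h : PellRing g) = pellElem g a b := rfl

@[simp]
theorem val_inv_pellUnit {a b : k[X]} (h : a ^ 2 - g * b ^ 2 = 1) :
    ((pellUnit h)⁻¹ : (PellRing g)ˣ) = pellElem g a (-b) := rfl

theorem degree_one_lt_degree_mul_sq (hg : 0 < g.natDegree) (hy : y ≠ 0) :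
    (1 : k[X]).degree < (g * y ^ 2).degree := by
  rw [degree_one, ← natDegree_pos_iff_degree_pos,
    natDegree_mul (ne_zero_of_natDegree_gt hg) (pow_ne_zero _ hy)]
  omega

theorem natDegree_pell (hg : 0 < g.natDegree) (h : x ^ 2 - g * y ^ 2 = 1) (hy : y ≠ 0) :
    x.natDegree * 2 = g.natDegree + y.natDegree * 2 := by
  have hx : x ^ 2 = 1 + g * y ^ 2 := by linear_combination h
  have := congrArg natDegree hx
  rw [natDegree_add_eq_right_of_degree_lt (degree_one_lt_degree_mul_sq hg hy), natDegree_pow,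
    natDegree_mul (ne_zero_of_natDegree_gt hg) (pow_ne_zero _ hy), natDegree_pow] at this
  omega

theorem leadingCoeff_pell (hg : 0 < g.natDegree) (h : x ^ 2 - g * y ^ 2 = 1) (hy : y ≠ 0) :
    x.leadingCoeff ^ 2 = g.leadingCoeff * y.leadingCoeff ^ 2 := by
  have hx : x ^ 2 = 1 + g * y ^ 2 := by linear_combination h
  rw [← leadingCoeff_pow, hx, leadingCoeff_add_of_degree_lt (degree_one_lt_degree_mul_sq hg hy),
    leadingCoeff_mul, leadingCoeff_pow]

theorem exists_sign_leadingCoeff_eq (hg : 0 < g.natDegree) (h₁ : φ₁ ^ 2 - g * ψ₁ ^ 2 = 1)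
    (h : φ ^ 2 - g * ψ ^ 2 = 1) (hψ₁ : ψ₁ ≠ 0) (hψ : ψ ≠ 0) :
    ∃ s : k[X], (s = ψ₁ ∨ s = -ψ₁) ∧
      ψ.leadingCoeff * φ₁.leadingCoeff = φ.leadingCoeff * s.leadingCoeff := by
  have hsq : (ψ.leadingCoeff * φ₁.leadingCoeff) ^ 2 = (φ.leadingCoeff * ψ₁.leadingCoeff) ^ 2 := by
    linear_combination ψ.leadingCoeff ^ 2 * leadingCoeff_pell hg h₁ hψ₁ -
      ψ₁.leadingCoeff ^ 2 * leadingCoeff_pell hg h hψ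
  rcases sq_eq_sq_iff_eq_or_eq_neg.mp hsq with hlc | hlc
  · exact ⟨ψ₁, .inl rfl, hlc⟩
  · exact ⟨-ψ₁, .inr rfl, by rw [leadingCoeff_neg, hlc, mul_neg]⟩

theorem degree_sub_lt_of_pell (h2 : (2 : k) ≠ 0) (hg : 0 < g.natDegree)
    (h₁ : φ₁ ^ 2 - g * ψ₁ ^ 2 = 1) (h : φ ^ 2 - g * ψ ^ 2 = 1) (hψ₁ : ψ₁ ≠ 0) (hψ : ψ ≠ 0)
    (hdeg : ψ₁.natDegree ≤ ψ.natDegree)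
    (hlc : ψ.leadingCoeff * φ₁.leadingCoeff = φ.leadingCoeff * ψ₁.leadingCoeff) :
    (ψ * φ₁ - φ * ψ₁).degree < ψ.degree := by
  have hdeg₁ := natDegree_pell hg h₁ hψ₁
  have hdegφ := natDegree_pell hg h hψ
  have hsum : φ.natDegree + ψ₁.natDegree = ψ.natDegree + φ₁.natDegree := by omega
  set D := ψ * φ₁ + φ * ψ₁
  have hcoeff : D.coeff (ψ.natDegree + φ₁.natDegree) = 2 * (ψ.leadingCoeff * φ₁.leadingCoeff) := by
    rw [coeff_add, coeff_mul_degree_add_degree, ← hsum, coeff_mul_degree_add_degree, hlc]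
    ring
  have hcoeff0 : D.coeff (ψ.natDegree + φ₁.natDegree) ≠ 0 := by
    have hφ₁ : φ₁ ≠ 0 := ne_zero_of_natDegree_gt (n := 0) (by omega)
    rw [hcoeff]
    exact mul_ne_zero h2 (mul_ne_zero (leadingCoeff_ne_zero.mpr hψ) (leadingCoeff_ne_zero.mpr hφ₁))
  have hD0 : D ≠ 0 := fun hD => hcoeff0 (by rw [hD, coeff_zero])
  have hDdeg : ψ.natDegree + φ₁.natDegree ≤ D.natDegree := le_natDegree_of_ne_zero hcoeff0
  have hprod : (ψ * φ₁ - φ * ψ₁) * D = ψ ^ 2 - ψ₁ ^ 2 := by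
    linear_combination ψ ^ 2 * h₁ - ψ₁ ^ 2 * h
  by_cases hy : ψ * φ₁ - φ * ψ₁ = 0
  · rw [hy, degree_zero]
    exact bot_lt_iff_ne_bot.mpr (degree_ne_bot.mpr hψ)
  rw [← natDegree_lt_natDegree_iff hy]
  have hle : (ψ ^ 2 - ψ₁ ^ 2).natDegree ≤ ψ.natDegree * 2 := by
    refine (natDegree_sub_le _ _).trans ?_
    rw [natDegree_pow, natDegree_pow]
    omega
  have := natDegree_mul hy hD0
  rw [hprod] at this
  omega

theorem exists_pellElem_eq_mul_of_natDegree_le (h2 : (2 : k) ≠ 0) (hg : 0 < g.natDegree)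
    (h₁ : φ₁ ^ 2 - g * ψ₁ ^ 2 = 1) (h : φ ^ 2 - g * ψ ^ 2 = 1) (hψ₁ : ψ₁ ≠ 0) (hψ : ψ ≠ 0)
    (hdeg : ψ₁.natDegree ≤ ψ.natDegree) :
    ∃ s : k[X], (s = ψ₁ ∨ s = -ψ₁) ∧ ∃ x y : k[X], x ^ 2 - g * y ^ 2 = 1 ∧
      y.degree < ψ.degree ∧ pellElem g φ ψ = pellElem g x y * pellElem g φ₁ s := by
  obtain ⟨s, hs, hlc⟩ := exists_sign_leadingCoeff_eq hg h₁ h hψ₁ hψ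
  have hs₁ : φ₁ ^ 2 - g * s ^ 2 = 1 := by rcases hs with rfl | rfl <;> linear_combination h₁
  have hs0 : s ≠ 0 := by rcases hs with rfl | rfl <;> simpa
  have hsdeg : s.natDegree = ψ₁.natDegree := by rcases hs with rfl | rfl <;> simp
  have hneg : φ₁ ^ 2 - g * (-s) ^ 2 = 1 := by linear_combination hs₁
  refine ⟨s, hs, _, _, pell_mul h hneg, ?_, ?_⟩
  · convert degree_sub_lt_of_pell h2 hg hs₁ h hs0 hψ (hsdeg ▸ hdeg) hlc using 2
    ring
  · have hinv : pellElem g φ₁ (-s) * pellElem g φ₁ s = 1 := by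
      simpa using pellElem_mul_pellElem_neg hneg
    rw [← pellElem_mul, mul_assoc, hinv, mul_one]

theorem exists_pellElem_eq_sign_mul_zpow (h2 : (2 : k) ≠ 0) (hg : 0 < g.natDegree)
    (h₁ : φ₁ ^ 2 - g * ψ₁ ^ 2 = 1) (hψ₁ : ψ₁ ≠ 0)
    (hmin : ∀ x y : k[X], x ^ 2 - g * y ^ 2 = 1 → y ≠ 0 → ψ₁.natDegree ≤ y.natDegree)
    (h : φ ^ 2 - g * ψ ^ 2 = 1) :
    ∃ (n : ℤ) (ε : PellRing g), (ε = 1 ∨ ε = -1) ∧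
      pellElem g φ ψ = ε * ((pellUnit h₁ ^ n : (PellRing g)ˣ) : PellRing g) := by
  induction hd : ψ.degree using WellFoundedLT.induction generalizing φ ψ with
  | ind d ih =>
    by_cases hψ : ψ = 0
    · subst hψ
      exact ⟨0, _, pellElem_eq_one_or_eq_neg_one (by linear_combination h), by simp⟩
    obtain ⟨s, hs, x, y, hxy, hy, hmul⟩ :=
      exists_pellElem_eq_mul_of_natDegree_le h2 hg h₁ h hψ₁ hψ (hmin φ ψ h hψ)
    obtain ⟨n, ε, hε, hn⟩ := ih _ (hd ▸ hy) hxy rfl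
    obtain ⟨e, he⟩ :
        ∃ e : ℤ, pellElem g φ₁ s = ((pellUnit h₁ ^ e : (PellRing g)ˣ) : PellRing g) := by
      rcases hs with rfl | rfl
      · exact ⟨1, by simp⟩
      · exact ⟨-1, by simp⟩
    exact ⟨n + e, ε, hε, by rw [hmul, hn, he, zpow_add, Units.val_mul, mul_assoc]⟩

end

/-- **Existence of a fundamental solution.**  If the polynomial Pell equation
`x² − g·y² = 1` has a nontrivial solution, then there is a fundamental solution
`(φ₁, ψ₁)` such that every solution `(φ, ψ)` satisfies
`φ + ψ·w = ±(φ₁ + ψ₁·w)ⁿ` or `φ + ψ·w = ±(φ₁ − ψ₁·w)ⁿ` in `k[u][w]/(w² − g)`. -/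
theorem pell_fundamental_solution
    {k : Type*} [Field k] (h2 : (2 : k) ≠ 0)
    (g : Polynomial k) (hg : 0 < g.natDegree)
    (hsol : ∃ x y : Polynomial k, x ^ 2 - g * y ^ 2 = 1 ∧ y ≠ 0) :
    ∃ φ₁ ψ₁ : Polynomial k, ψ₁ ≠ 0 ∧ φ₁ ^ 2 - g * ψ₁ ^ 2 = 1 ∧
      ∀ φ ψ : Polynomial k, φ ^ 2 - g * ψ ^ 2 = 1 →
        ∃ (n : ℕ) (ε : PellRing g), (ε = 1 ∨ ε = -1) ∧
          (pellElem g φ ψ = ε * (pellElem g φ₁ ψ₁) ^ n ∨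
           pellElem g φ ψ = ε * (pellElem g φ₁ (-ψ₁)) ^ n) := by
  obtain ⟨⟨φ₁, ψ₁⟩, ⟨h₁, hψ₁⟩, hmin⟩ := exists_minimalFor_of_wellFoundedLT
    (fun p : k[X] × k[X] => p.1 ^ 2 - g * p.2 ^ 2 = 1 ∧ p.2 ≠ 0) (fun p => p.2.natDegree)
    (by obtain ⟨x, y, h⟩ := hsol; exact ⟨(x, y), h⟩)
  have hmin' (x y : k[X]) (h : x ^ 2 - g * y ^ 2 = 1) (hy : y ≠ 0) :
      ψ₁.natDegree ≤ y.natDegree :=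
    (le_total y.natDegree ψ₁.natDegree).elim (hmin (j := (x, y)) ⟨h, hy⟩) id
  refine ⟨φ₁, ψ₁, hψ₁, h₁, fun φ ψ h => ?_⟩
  obtain ⟨n, ε, hε, hz⟩ := exists_pellElem_eq_sign_mul_zpow h2 hg h₁ hψ₁ hmin' h
  obtain ⟨m, rfl | rfl⟩ := Int.eq_nat_or_neg n
  · exact ⟨m, ε, hε, .inl (by simpa using hz)⟩
  · exact ⟨m, ε, hε, .inr (by simpa using hz)⟩
end

section
/- Let k be a field of characteristic ≠ 2 and g ∈ k[u] a nonconstant polynomial of even degree whose leading coefficient is not a square in k. Then for every nonconstant polynomial q ∈ k[t], every nonzero constant c ∈ k, and every pair (x, y) ∈ k[t]² satisfying x² − g(q(t))·y² = c, one has y = 0. -/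
/-!
If `y ≠ 0`, then `g(q) * y²` has positive degree, so it dominates the constant `c` and comparing
leading coefficients in `x² = c + g(q) * y²` gives `lc(x)² = lc(g) * lc(q) ^ deg g * lc(y)²`.
As `deg g` is even, this exhibits `lc(g)` as a square.
-/

open Polynomial

theorem leadingCoeff_sq_eq_of_sub_mul_sq_eq_C {R : Type*} [CommRing R] [NoZeroDivisors R]
    {p x y : R[X]} {c : R} (hp : 0 < p.natDegree) (hy : y ≠ 0)
    (h : x ^ 2 - p * y ^ 2 = C c) :
    x.leadingCoeff ^ 2 = p.leadingCoeff * y.leadingCoeff ^ 2 := by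
  have hp0 : p ≠ 0 := ne_zero_of_natDegree_gt hp
  have hpy0 : p * y ^ 2 ≠ 0 := mul_ne_zero hp0 (pow_ne_zero 2 hy)
  have hdeg : (C c).degree < (p * y ^ 2).degree := by
    rw [degree_eq_natDegree hpy0, natDegree_mul hp0 (pow_ne_zero 2 hy)]
    exact degree_C_le.trans_lt (by exact_mod_cast Nat.lt_add_right _ hp)
  have hx : x ^ 2 = C c + p * y ^ 2 := by linear_combination h
  rw [← leadingCoeff_pow, hx, leadingCoeff_add_of_degree_lt hdeg, leadingCoeff_mul,
    leadingCoeff_pow]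

theorem isSquare_of_sq_eq_mul_sq {K : Type*} [Field K] {a b c : K} (hb : b ≠ 0)
    (h : c ^ 2 = a * b ^ 2) : IsSquare a :=
  ⟨c / b, by field_simp; linear_combination -h⟩

theorem leadingCoeff_comp_of_natDegree_eq_two_mul {R : Type*} [CommRing R] [NoZeroDivisors R]
    {g q : R[X]} {m : ℕ} (hq : q.natDegree ≠ 0) (hm : g.natDegree = 2 * m) :
    (g.comp q).leadingCoeff = g.leadingCoeff * (q.leadingCoeff ^ m) ^ 2 := by
  rw [leadingCoeff_comp hq, hm, ← pow_mul, mul_comm m]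

theorem pell_nonsquare_leadingCoeff_trivial_general
    {k : Type*} [Field k]
    (g : Polynomial k) (hg : 0 < g.natDegree) (hgdeg : Even g.natDegree)
    (hlead : ¬ IsSquare g.leadingCoeff)
    (q : Polynomial k) (hq : 0 < q.natDegree)
    (c : k)
    (x y : Polynomial k) (h : x ^ 2 - g.comp q * y ^ 2 = C c) :
    y = 0 := by
  by_contra hy
  obtain ⟨m, hm⟩ := hgdeg.exists_two_nsmul
  have hgq : 0 < (g.comp q).natDegree := by rw [natDegree_comp]; positivity
  have key := leadingCoeff_sq_eq_of_sub_mul_sq_eq_C hgq hy h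
  rw [leadingCoeff_comp_of_natDegree_eq_two_mul hq.ne' hm, mul_assoc, ← mul_pow] at key
  have hq0 : q ≠ 0 := ne_zero_of_natDegree_gt hq
  exact hlead (isSquare_of_sq_eq_mul_sq (by simp [hq0, hy]) key)

/-- **No nontrivial solutions when the leading coefficient is not a square.**
If `g ∈ k[u]` is nonconstant of even degree with non-square leading
coefficient, then for every nonconstant `q ∈ k[t]` and every nonzero constant
`c`, every solution of `x² − g(q(t))·y² = c` has `y = 0`. -/
theorem pell_nonsquare_leadingCoeff_trivial
    {k : Type*} [Field k] (h2 : (2 : k) ≠ 0)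
    (g : Polynomial k) (hg : 0 < g.natDegree) (hgdeg : Even g.natDegree)
    (hlead : ¬ IsSquare g.leadingCoeff)
    (q : Polynomial k) (hq : 0 < q.natDegree)
    (c : k) (hc : c ≠ 0)
    (x y : Polynomial k) (h : x ^ 2 - g.comp q * y ^ 2 = C c) :
    y = 0 :=
  pell_nonsquare_leadingCoeff_trivial_general g hg hgdeg hlead q hq c x y h
end

section
/- Let k be a field of characteristic ≠ 2 and g ∈ k[u] a nonconstant polynomial. Let (φ, ψ) ∈ k[u]² satisfy φ² − g·ψ² = 1 with ψ ≠ 0. Then: (a) 2·deg φ = 2·deg ψ + deg g (in particular deg g is even); and (b) if for n ≥ 1 the pair (φₙ, ψₙ) ∈ k[u]² is defined by φₙ + ψₙ·w = (φ + ψ·w)ⁿ in the ring A_g = k[u][w]/(w² − g), then deg φₙ = n·deg φ and 2·deg ψₙ = 2n·deg φ − deg g; in particular deg φₙ ≥ (n/2)·deg g and deg ψₙ ≥ ((n−1)/2)·deg g. -/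
/-!
Put `α = φ + ψ·w`. The Pell equation says `α·ᾱ = 1`, and `α + ᾱ = 2φ`, so `α² = 2φ·α − 1`:
the powers of `α` obey the Chebyshev recurrence, whence `αⁿ = Tₙ(φ) + ψ·Uₙ₋₁(φ)·w`.
As `2 ≠ 0`, `Tₙ` and `Uₙ₋₁` have degrees `n` and `n − 1`, and the degrees of `φₙ`, `ψₙ`
follow from `deg (p ∘ φ) = deg p · deg φ` together with `2·deg φ = 2·deg ψ + deg g`,
which is read off from `φ² = g·ψ² + 1`.
-/

open Polynomial

theorem Polynomial.comp_ne_zero {R : Type*} [Semiring R] [NoZeroDivisors R] {p q : R[X]}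
    (hp : p ≠ 0) (hq : q.natDegree ≠ 0) : p.comp q ≠ 0 := by
  rw [Ne, comp_eq_zero_iff, not_or, not_and_or]
  exact ⟨hp, Or.inr fun h => hq (by rw [h, natDegree_C])⟩

namespace Polynomial.Chebyshev

theorem add_mul_pow_eq {A : Type*} [CommRing A] {x y s : A} (h : x ^ 2 - y ^ 2 * s ^ 2 = 1)
    (n : ℕ) : (x + y * s) ^ n = (T A n).eval x + y * (U A (n - 1 : ℤ)).eval x * s := by
  induction n using Nat.twoStepInduction with
  | zero => simp
  | one => simp
  | more n ih₀ ih₁ =>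
    have hT : T A (n + 2 : ℕ) = 2 * X * T A (n + 1 : ℕ) - T A n := by
      push_cast
      exact T_add_two A n
    have hU : U A ((n + 2 : ℕ) - 1 : ℤ)
        = 2 * X * U A ((n + 1 : ℕ) - 1 : ℤ) - U A (n - 1 : ℤ) := by
      push_cast
      rw [add_sub_cancel_right, show (n : ℤ) + 2 - 1 = n + 1 by ring, U_add_one]
    rw [hT, hU]
    simp only [eval_sub, eval_mul, eval_X, eval_ofNat]
    -- `(x + y s)² = 2x (x + y s) − 1` is the hypothesis `h`
    linear_combination (x + y * s) ^ n * (-h) + 2 * x * ih₁ - ih₀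

theorem eval_T_eq_comp {R : Type*} [CommRing R] (φ : R[X]) (n : ℤ) :
    (T R[X] n).eval φ = (T R n).comp φ := by
  rw [← map_T Polynomial.C, eval_map]
  rfl

theorem eval_U_eq_comp {R : Type*} [CommRing R] (φ : R[X]) (n : ℤ) :
    (U R[X] n).eval φ = (U R n).comp φ := by
  rw [← map_U Polynomial.C, eval_map]
  rfl

end Polynomial.Chebyshev

theorem two_mul_natDegree_eq_of_pell {R : Type*} [CommRing R] [IsDomain R] {g φ ψ : R[X]}
    (hg : 0 < g.natDegree) (hψ : ψ ≠ 0) (hsol : φ ^ 2 - g * ψ ^ 2 = 1) :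
    2 * φ.natDegree = 2 * ψ.natDegree + g.natDegree := by
  have hgψ : (g * ψ ^ 2).natDegree = 2 * ψ.natDegree + g.natDegree := by
    rw [natDegree_mul (ne_zero_of_natDegree_gt hg) (pow_ne_zero 2 hψ), natDegree_pow, add_comm]
  calc 2 * φ.natDegree = (g * ψ ^ 2 + 1).natDegree := by
        rw [← natDegree_pow, ← hsol, add_sub_cancel]
    _ = 2 * ψ.natDegree + g.natDegree := by
        rw [natDegree_add_eq_left_of_natDegree_lt (by rw [natDegree_one, hgψ]; omega), hgψ]

section PellRing

variable {k : Type*} [Field k] {g : k[X]}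

theorem pellElem_eq_mk (a b : k[X]) : pellElem g a b = AdjoinRoot.mk _ (C a + C b * X) := by
  simp [pellElem]

theorem eq_and_eq_of_pellElem_eq {a b a' b' : k[X]} (h : pellElem g a b = pellElem g a' b') :
    a = a' ∧ b = b' := by
  have hmonic : ((X : k[X][X]) ^ 2 - C g).Monic := monic_X_pow_sub_C g two_ne_zero
  have hreduce (a b : k[X]) :
      AdjoinRoot.modByMonicHom hmonic (pellElem g a b) = C a + C b * X := by
    rw [pellElem_eq_mk, AdjoinRoot.modByMonicHom_mk, modByMonic_eq_self_iff hmonic,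
      degree_X_pow_sub_C two_pos]
    compute_degree!
  have h' := congrArg (AdjoinRoot.modByMonicHom hmonic) h
  rw [hreduce, hreduce] at h'
  exact ⟨by simpa using congrArg (coeff · 0) h', by simpa using congrArg (coeff · 1) h'⟩

open Polynomial.Chebyshev in
theorem pellElem_pow {φ ψ : k[X]} (hsol : φ ^ 2 - g * ψ ^ 2 = 1) (n : ℕ) :
    pellElem g φ ψ ^ n = pellElem g ((T k n).comp φ) (ψ * (U k (n - 1 : ℤ)).comp φ) := by
  have hroot : AdjoinRoot.root ((X : k[X][X]) ^ 2 - C g) ^ 2 = AdjoinRoot.of _ g := by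
    have := AdjoinRoot.eval₂_root ((X : k[X][X]) ^ 2 - C g)
    rwa [eval₂_sub, eval₂_X_pow, eval₂_C, sub_eq_zero] at this
  have hnorm : AdjoinRoot.of ((X : k[X][X]) ^ 2 - C g) φ ^ 2
      - AdjoinRoot.of _ ψ ^ 2 * AdjoinRoot.root _ ^ 2 = 1 := by
    rw [hroot, ← map_pow, ← map_pow, ← map_mul, ← map_sub, mul_comm, hsol, map_one]
  rw [pellElem, pellElem, add_mul_pow_eq hnorm, ← eval_T_eq_comp, ← eval_U_eq_comp, map_mul,
    ← AdjoinRoot.algebraMap_eq, algebraMap_eval_T, algebraMap_eval_U]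

end PellRing

open Polynomial.Chebyshev in
/-- **Degrees of solutions of the Pell equation.**  Let `(φ, ψ)` be a
nontrivial solution of `φ² − g·ψ² = 1`.  Then `2·deg φ = 2·deg ψ + deg g`
(so `deg g` is even), and if `(φₙ, ψₙ)` is defined by
`φₙ + ψₙ·w = (φ + ψ·w)ⁿ` for `n ≥ 1`, then `deg φₙ = n·deg φ` and
`2·deg ψₙ + deg g = 2n·deg φ`; in particular `2·deg φₙ ≥ n·deg g` and
`2·deg ψₙ ≥ (n−1)·deg g`. -/
theorem pell_solution_degrees
    {k : Type*} [Field k] (h2 : (2 : k) ≠ 0)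
    (g : Polynomial k) (hg : 0 < g.natDegree)
    (φ ψ : Polynomial k) (hψ : ψ ≠ 0) (hsol : φ ^ 2 - g * ψ ^ 2 = 1) :
    (2 * φ.natDegree = 2 * ψ.natDegree + g.natDegree ∧ Even g.natDegree) ∧
    ∀ n : ℕ, 1 ≤ n → ∀ φₙ ψₙ : Polynomial k,
      pellElem g φₙ ψₙ = (pellElem g φ ψ) ^ n →
        φₙ.natDegree = n * φ.natDegree ∧
        2 * ψₙ.natDegree + g.natDegree = 2 * n * φ.natDegree ∧
        n * g.natDegree ≤ 2 * φₙ.natDegree ∧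
        (n - 1) * g.natDegree ≤ 2 * ψₙ.natDegree := by
  have : NeZero (2 : k) := ⟨h2⟩
  have hdeg := two_mul_natDegree_eq_of_pell hg hψ hsol
  refine ⟨⟨hdeg, φ.natDegree - ψ.natDegree, by omega⟩, ?_⟩
  intro n hn φₙ ψₙ hpow
  obtain ⟨rfl, rfl⟩ := eq_and_eq_of_pellElem_eq (hpow.trans (pellElem_pow hsol n))
  have hφₙ : ((T k n).comp φ).natDegree = n * φ.natDegree := by
    rw [natDegree_comp, natDegree_T, Int.natAbs_natCast]
  have hψₙ : (ψ * (U k (n - 1 : ℤ)).comp φ).natDegree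
      = ψ.natDegree + (n - 1) * φ.natDegree := by
    have hU : (U k (n - 1 : ℤ)).comp φ ≠ 0 :=
      comp_ne_zero (U_ne_zero k _ (by omega)) (by omega)
    rw [natDegree_mul hψ hU, natDegree_comp, natDegree_U, sub_add_cancel, Int.natAbs_natCast]
  rw [hφₙ, hψₙ]
  obtain ⟨m, rfl⟩ := Nat.exists_eq_add_of_le' hn
  rw [Nat.add_sub_cancel]
  exact ⟨rfl, by linarith, by nlinarith, by nlinarith⟩
end

section
/- Let k be a field of characteristic ≠ 2 and g ∈ k[u] a nonconstant polynomial. If (φ, ψ) and (φ′, ψ′) are two solutions of x² − g·y² = 1 in k[u] with ψ ≠ 0, ψ′ ≠ 0, 2·deg ψ < deg g, and 2·deg ψ′ < deg g, then φ′ = ±φ and ψ′ = ±ψ. (Any solution whose y-component has degree less than (deg g)/2 is a fundamental solution, and the fundamental solution is unique up to changing the signs of its two components.) -/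
/-!
For two solutions `(φ, ψ)`, `(φ', ψ')` the factors `A = φψ' - φ'ψ` and `B = φψ' + φ'ψ`
satisfy `A * B = ψ'² - ψ²` and `A + B = 2φψ'`. Since `deg φ = (deg g)/2 + deg ψ`, the sum
`A + B` has degree larger than `2 max(deg ψ, deg ψ')`, whereas a nonzero product `A * B` has
degree at least that of `A + B`. Hence `A * B = 0`, i.e. `ψ'² = ψ²`, and then also `φ'² = φ²`.
-/

open Polynomial

theorem Polynomial.natDegree_add_le_natDegree_mul {R : Type*} [Semiring R] [NoZeroDivisors R]
    {p q : R[X]} (hpq : p * q ≠ 0) : (p + q).natDegree ≤ (p * q).natDegree := by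
  rw [natDegree_mul (left_ne_zero_of_mul hpq) (right_ne_zero_of_mul hpq)]
  exact (natDegree_add_le p q).trans (max_le_add_of_nonneg (Nat.zero_le _) (Nat.zero_le _))

section Pell

variable {R : Type*} [CommRing R] [NoZeroDivisors R] {g x y x' y' : R[X]}

theorem two_mul_natDegree_pell_fst (hsol : x ^ 2 - g * y ^ 2 = 1) (hg : g ≠ 0) (hy : y ≠ 0) :
    2 * x.natDegree = g.natDegree + 2 * y.natDegree := by
  have hx : x ^ 2 = C 1 + g * y ^ 2 := by rw [C_1]; linear_combination hsol
  rw [← natDegree_pow, hx, natDegree_C_add, natDegree_mul hg (pow_ne_zero 2 hy), natDegree_pow]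

theorem pell_snd_sq_eq_of_two_mul_natDegree_lt (h2 : (2 : R) ≠ 0)
    (hsol : x ^ 2 - g * y ^ 2 = 1) (hsol' : x' ^ 2 - g * y' ^ 2 = 1)
    (hy : y ≠ 0) (hy' : y' ≠ 0)
    (hdeg : 2 * y.natDegree < g.natDegree) (hdeg' : 2 * y'.natDegree < g.natDegree) :
    y' ^ 2 = y ^ 2 := by
  by_contra hne
  have hx := two_mul_natDegree_pell_fst hsol (ne_zero_of_natDegree_gt hdeg) hy
  have hx0 : x ≠ 0 := by rintro rfl; simp at hx; omega
  have hprod : (x * y' - x' * y) * (x * y' + x' * y) = y' ^ 2 - y ^ 2 := by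
    linear_combination y' ^ 2 * hsol - y ^ 2 * hsol'
  have hsum : (x * y' - x' * y) + (x * y' + x' * y) = C 2 * (x * y') := by
    rw [C_ofNat]; ring
  have hle := natDegree_add_le_natDegree_mul (hprod ▸ sub_ne_zero.mpr hne)
  rw [hsum, hprod, natDegree_C_mul h2, natDegree_mul hx0 hy'] at hle
  have hsq := natDegree_sub_le (y' ^ 2) (y ^ 2)
  rw [natDegree_pow, natDegree_pow] at hsq
  omega

end Pell

theorem pell_fundamental_solution_unique_general
    {k : Type*} [Field k] (h2 : (2 : k) ≠ 0)
    (g : Polynomial k)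
    (φ ψ φ' ψ' : Polynomial k)
    (hsol : φ ^ 2 - g * ψ ^ 2 = 1) (hsol' : φ' ^ 2 - g * ψ' ^ 2 = 1)
    (hψ : ψ ≠ 0) (hψ' : ψ' ≠ 0)
    (hdeg : 2 * ψ.natDegree < g.natDegree)
    (hdeg' : 2 * ψ'.natDegree < g.natDegree) :
    (φ' = φ ∨ φ' = -φ) ∧ (ψ' = ψ ∨ ψ' = -ψ) := by
  have hψsq := pell_snd_sq_eq_of_two_mul_natDegree_lt h2 hsol hsol' hψ hψ' hdeg hdeg'
  have hφsq : φ' ^ 2 = φ ^ 2 := by linear_combination hsol' - hsol + g * hψsq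
  exact ⟨sq_eq_sq_iff_eq_or_eq_neg.mp hφsq, sq_eq_sq_iff_eq_or_eq_neg.mp hψsq⟩

/-- **Uniqueness of the fundamental solution.**  Two solutions of
`x² − g·y² = 1` whose `y`-components are nonzero of degree `< (deg g)/2`
agree up to changing the signs of the components. -/
theorem pell_fundamental_solution_unique
    {k : Type*} [Field k] (h2 : (2 : k) ≠ 0)
    (g : Polynomial k) (hg : 0 < g.natDegree)
    (φ ψ φ' ψ' : Polynomial k)
    (hsol : φ ^ 2 - g * ψ ^ 2 = 1) (hsol' : φ' ^ 2 - g * ψ' ^ 2 = 1)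
    (hψ : ψ ≠ 0) (hψ' : ψ' ≠ 0)
    (hdeg : 2 * ψ.natDegree < g.natDegree)
    (hdeg' : 2 * ψ'.natDegree < g.natDegree) :
    (φ' = φ ∨ φ' = -φ) ∧ (ψ' = ψ ∨ ψ' = -ψ) :=
  pell_fundamental_solution_unique_general h2 g φ ψ φ' ψ' hsol hsol' hψ hψ' hdeg hdeg'
end

section
/- Let k be a field of characteristic 0. Then the set { y(1) : (x, y) ∈ k[t]², x² − (t² − 1)·y² = 1, y ≠ 0, x(1) = 1 } is exactly the image in k of the set of nonzero integers. (Equivalently, the nontrivial affine lines on the Pell surface S₂ = (x² − (u² − 1)y² = 1) meet the vertical line L = (x − 1 = u − 1 = 0) precisely in the points (1, n, 1) with n ∈ ℤ ∖ {0}.) -/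
/-!
Multiplying `x + y√(t² − 1)` by the units `t ± √(t² − 1)` preserves `x² − (t² − 1)y² = 1` and
`x(1) = 1` and shifts `y(1)` by `±1`, so starting from `(1, 0)` every integer is reached.

Conversely, differentiating the equation gives `x x' = y (t y + (t² − 1) y')`; as `x` and `y` are
coprime, `y ∣ x'`, and since `deg x = deg y + 1` this forces `x' = c y` for a constant `c`.
Cancelling `y` and evaluating at `t = 1` gives `c = y(1)`, while comparing leading coefficients
(whose squares agree by the equation) gives `c = ±(deg y + 1)`.
-/

open Polynomial

namespace Polynomial

theorem exists_C_mul_eq_of_dvd_of_natDegree_le {R : Type*} [CommRing R] [IsDomain R]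
    {p q : R[X]} (hdvd : q ∣ p) (hdeg : p.natDegree ≤ q.natDegree) : ∃ c, p = C c * q := by
  obtain ⟨r, rfl⟩ := hdvd
  by_cases hr : r = 0
  · exact ⟨0, by simp [hr]⟩
  by_cases hq : q = 0
  · exact ⟨0, by simp [hq]⟩
  rw [natDegree_mul hq hr] at hdeg
  exact ⟨r.coeff 0, by rw [mul_comm, ← eq_C_of_natDegree_eq_zero (by omega)]⟩

theorem isCoprime_of_sq_sub_mul_sq_eq_one {R : Type*} [CommRing R] {D x y : R}
    (h : x ^ 2 - D * y ^ 2 = 1) : IsCoprime x y :=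
  ⟨x, -(D * y), by linear_combination h⟩

section Pell

variable {R : Type*} [CommRing R]

theorem exists_pell_eval_one_eq_intCast (n : ℤ) :
    ∃ x y : R[X], x ^ 2 - (X ^ 2 - 1) * y ^ 2 = 1 ∧ x.eval 1 = 1 ∧ y.eval 1 = n := by
  induction n using Int.induction_on with
  | zero => exact ⟨1, 0, by ring, by simp, by simp⟩
  | succ n ih =>
    obtain ⟨x, y, h, hx, hy⟩ := ih
    exact ⟨X * x + (X ^ 2 - 1) * y, x + X * y, by linear_combination h, by simp [hx],
      by simp [hx, hy]; ring⟩
  | pred n ih =>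
    obtain ⟨x, y, h, hx, hy⟩ := ih
    exact ⟨X * x - (X ^ 2 - 1) * y, X * y - x, by linear_combination h, by simp [hx],
      by simp [hx, hy]⟩

variable [IsDomain R]

theorem pell_natDegree_and_leadingCoeff_sq {x y : R[X]}
    (h : x ^ 2 - (X ^ 2 - 1) * y ^ 2 = 1) (hy : y ≠ 0) :
    x.natDegree = y.natDegree + 1 ∧ x.leadingCoeff ^ 2 = y.leadingCoeff ^ 2 := by
  have hmonic : (X ^ 2 - 1 : R[X]).Monic := by simpa using monic_X_pow_sub_C (1 : R) two_ne_zero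
  have hD : (X ^ 2 - 1 : R[X]).natDegree = 2 := by
    simpa using natDegree_X_pow_sub_C (n := 2) (r := (1 : R))
  have hsq : x ^ 2 = (X ^ 2 - 1) * y ^ 2 + 1 := by linear_combination h
  have hdeg : ((X ^ 2 - 1) * y ^ 2).natDegree = 2 * y.natDegree + 2 := by
    rw [hmonic.natDegree_mul' (pow_ne_zero 2 hy), hD, natDegree_pow]; ring
  have hlt : (1 : R[X]).degree < ((X ^ 2 - 1) * y ^ 2).degree := by
    rw [degree_one, degree_eq_natDegree (mul_ne_zero hmonic.ne_zero (pow_ne_zero 2 hy))]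
    exact_mod_cast (by omega : 0 < ((X ^ 2 - 1) * y ^ 2).natDegree)
  constructor
  · have := congrArg natDegree hsq
    rw [natDegree_pow, add_comm, natDegree_add_eq_right_of_degree_lt hlt, hdeg] at this
    omega
  · have := congrArg leadingCoeff hsq
    rwa [leadingCoeff_pow, add_comm, leadingCoeff_add_of_degree_lt hlt,
      leadingCoeff_monic_mul hmonic, leadingCoeff_pow] at this

variable [CharZero R]

theorem pell_mul_derivative {x y : R[X]} (h : x ^ 2 - (X ^ 2 - 1) * y ^ 2 = 1) :
    x * derivative x = y * (X * y + (X ^ 2 - 1) * derivative y) := by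
  have hd := congrArg derivative h
  simp only [derivative_sub, derivative_mul, derivative_pow, derivative_one, derivative_X,
    Nat.cast_ofNat, map_ofNat] at hd
  refine mul_left_cancel₀ (two_ne_zero (α := R[X])) ?_
  linear_combination hd

theorem pell_eval_one_sq {x y : R[X]} (h : x ^ 2 - (X ^ 2 - 1) * y ^ 2 = 1) (hy : y ≠ 0)
    (hx : x.eval 1 = 1) : y.eval 1 ^ 2 = ((y.natDegree : R) + 1) ^ 2 := by
  obtain ⟨hdeg, hlc⟩ := pell_natDegree_and_leadingCoeff_sq h hy
  have hder := pell_mul_derivative h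
  have hdvd : y ∣ derivative x :=
    (isCoprime_of_sq_sub_mul_sq_eq_one h).symm.dvd_of_dvd_mul_left ⟨_, hder⟩
  obtain ⟨c, hc⟩ := exists_C_mul_eq_of_dvd_of_natDegree_le hdvd
    (by have := natDegree_derivative_le x; omega)
  have hc1 : c = y.eval 1 := by
    have : C c * x = X * y + (X ^ 2 - 1) * derivative y :=
      mul_left_cancel₀ hy (by rw [← hder, hc]; ring)
    simpa [hx] using congrArg (eval 1) this
  have hcoeff : x.leadingCoeff * (y.natDegree + 1) = c * y.leadingCoeff := by
    simpa [coeff_derivative, ← hdeg] using congrArg (coeff · y.natDegree) hc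
  rw [← hc1]
  refine mul_right_cancel₀ (pow_ne_zero 2 (leadingCoeff_ne_zero.2 hy)) ?_
  linear_combination (-(c * y.leadingCoeff + (y.natDegree + 1) * x.leadingCoeff)) * hcoeff
    + (y.natDegree + 1) ^ 2 * hlc

end Pell

end Polynomial

/-- **Intersections with the line `L = (x−1 = u−1 = 0)`.**  Over a field of
characteristic `0`, the values at `t = 1` of the `y`-components of nontrivial
solutions of `x² − (t² − 1)·y² = 1` with `x(1) = 1` are exactly the images in
`k` of the nonzero integers. -/
theorem pell_lines_meet_L_in_integers
    {k : Type*} [Field k] [CharZero k] :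
    {v : k | ∃ x y : Polynomial k,
        x ^ 2 - ((X : Polynomial k) ^ 2 - 1) * y ^ 2 = 1 ∧ y ≠ 0 ∧
        x.eval 1 = 1 ∧ y.eval 1 = v} =
    {v : k | ∃ n : ℤ, n ≠ 0 ∧ (n : k) = v} := by
  ext v
  constructor
  · rintro ⟨x, y, h, hy, hx, rfl⟩
    obtain hpos | hneg := sq_eq_sq_iff_eq_or_eq_neg.1 (pell_eval_one_sq h hy hx)
    · exact ⟨y.natDegree + 1, by omega, by push_cast; exact hpos.symm⟩
    · exact ⟨-(y.natDegree + 1), by omega, by push_cast; exact hneg.symm⟩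
  · rintro ⟨n, hn, rfl⟩
    obtain ⟨x, y, h, hx, hy⟩ := exists_pell_eval_one_eq_intCast (R := k) n
    refine ⟨x, y, h, ?_, hx, hy⟩
    rintro rfl
    exact hn (by exact_mod_cast (eval_zero.symm.trans hy).symm)
end

section
/- For n ∈ ℕ define xₙ, yₙ ∈ ℂ[t] by xₙ + yₙ·w = (t + w)ⁿ in the ring ℂ[t][w]/(w² − (t² − 1)). Then for every b ∈ ℂ with b² ≠ 1, the following are equivalent: (i) there exist distinct natural numbers m ≠ n with xₘ(b) = xₙ(b) and yₘ(b) = yₙ(b); (ii) there is a rational number α with b = cos(2πα). (The fibers of the Pell surface S₂ = (x² − (u² − 1)y² = 1) over which two distinct sections intersect are exactly those lying over the set R_∞ = {cos(2πα) : α ∈ ℚ}.) -/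
open Polynomial

/-!
Choose `c` with `c² = b² − 1`; then `c ≠ 0` and `z = b + c` satisfies `z (b − c) = 1`.
Specializing `t ↦ b`, `w ↦ ±c` turns the defining identity into
`xₙ(b) ± yₙ(b) c = (b ± c)ⁿ`, so the `n`-th and `m`-th sections meet over `b` exactly when
`zᵐ = zⁿ`, i.e. when `z` is a root of unity `e^{2πiα}`, `α ∈ ℚ`. Since `z` is a root of
`w² − 2bw + 1`, whose roots are `e^{±iθ}` when `b = cos θ`, this happens iff `b = cos 2πα`.
-/

/-- The ring `ℂ[t][w]/(w² − (t² − 1))`. -/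
noncomputable abbrev PellRing2C :=
  AdjoinRoot ((X : Polynomial (Polynomial ℂ)) ^ 2 - C ((X : Polynomial ℂ) ^ 2 - 1))

/-- The element `a + b·w` of `ℂ[t][w]/(w² − (t² − 1))`. -/
noncomputable def pellElem2C (a b : Polynomial ℂ) : PellRing2C :=
  AdjoinRoot.of _ a + AdjoinRoot.of _ b * AdjoinRoot.root _

noncomputable def pellEvalHom (b c : ℂ) (hc : c ^ 2 = b ^ 2 - 1) : PellRing2C →+* ℂ :=
  AdjoinRoot.lift (evalRingHom b) c (by
    rw [eval₂_sub, eval₂_pow, eval₂_X, eval₂_C, hc]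
    simp)

lemma pellEvalHom_pellElem2C (b c : ℂ) (hc : c ^ 2 = b ^ 2 - 1) (p q : Polynomial ℂ) :
    pellEvalHom b c hc (pellElem2C p q) = p.eval b + q.eval b * c := by
  simp [pellEvalHom, pellElem2C]

lemma eval_add_eval_mul_eq_pow {x y : ℕ → Polynomial ℂ}
    (hxy : ∀ n : ℕ, pellElem2C (x n) (y n) = (pellElem2C (X : Polynomial ℂ) 1) ^ n)
    {b c : ℂ} (hc : c ^ 2 = b ^ 2 - 1) (n : ℕ) :
    (x n).eval b + (y n).eval b * c = (b + c) ^ n := by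
  simpa [pellEvalHom_pellElem2C] using congrArg (pellEvalHom b c hc) (hxy n)

lemma eval_eq_and_eval_eq_iff_pow_eq_pow {x y : ℕ → Polynomial ℂ}
    (hxy : ∀ n : ℕ, pellElem2C (x n) (y n) = (pellElem2C (X : Polynomial ℂ) 1) ^ n)
    {b c : ℂ} (hc : c ^ 2 = b ^ 2 - 1) (hc0 : c ≠ 0) (m n : ℕ) :
    (x m).eval b = (x n).eval b ∧ (y m).eval b = (y n).eval b ↔ (b + c) ^ m = (b + c) ^ n := by
  have plus := eval_add_eval_mul_eq_pow hxy hc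
  have minus := eval_add_eval_mul_eq_pow hxy (b := b) (c := -c) (by rw [neg_sq, hc])
  simp only [← sub_eq_add_neg, mul_neg] at minus
  refine ⟨fun ⟨hx, hy⟩ => by rw [← plus, ← plus, hx, hy], fun h => ?_⟩
  have hunit (k : ℕ) : (b + c) ^ k * (b - c) ^ k = 1 := by
    rw [← mul_pow, show (b + c) * (b - c) = 1 by linear_combination -hc, one_pow]
  have h' : (b - c) ^ m = (b - c) ^ n := by
    linear_combination (b - c) ^ n * hunit m - (b - c) ^ m * hunit n
      - (b - c) ^ m * (b - c) ^ n * h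
  have hy : ((y m).eval b - (y n).eval b) * c = 0 := by
    linear_combination (plus m - plus n - minus m + minus n + h - h') / 2
  refine ⟨?_, sub_eq_zero.mp ((mul_eq_zero.mp hy).resolve_right hc0)⟩
  linear_combination (plus m - plus n + minus m - minus n + h + h') / 2

theorem exists_pow_eq_pow_iff_isOfFinOrder {M : Type*} [MonoidWithZero M] [IsCancelMulZero M]
    {z : M} (hz : z ≠ 0) : (∃ m n : ℕ, m ≠ n ∧ z ^ m = z ^ n) ↔ IsOfFinOrder z := by
  rw [isOfFinOrder_iff_pow_eq_one]
  constructor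
  · rintro ⟨m, n, hmn, h⟩
    wlog hlt : n < m generalizing m n
    · exact this n m hmn.symm h.symm (by omega)
    refine ⟨m - n, by omega, mul_right_cancel₀ (pow_ne_zero n hz) ?_⟩
    rw [← pow_add, Nat.sub_add_cancel hlt.le, h, one_mul]
  · rintro ⟨k, hk, h⟩
    exact ⟨k, 0, hk.ne', by rw [h, pow_zero]⟩

namespace Complex

theorem isOfFinOrder_iff_exists_rat_exp {z : ℂ} :
    IsOfFinOrder z ↔ ∃ q : ℚ, exp (2 * Real.pi * I * q) = z := by
  constructor
  · intro hz
    obtain ⟨i, -, -, hi⟩ :=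
      (isPrimitiveRoot_iff z _ hz.orderOf_pos.ne').mp (IsPrimitiveRoot.orderOf z)
    exact ⟨i / orderOf z, by push_cast; exact hi⟩
  · rintro ⟨q, rfl⟩
    exact (isPrimitiveRoot_exp_rat q).isOfFinOrder q.den_nz

theorem exists_rat_exp_eq_iff_exists_rat_cos_eq {b z : ℂ} (hz : z ^ 2 - 2 * b * z + 1 = 0) :
    (∃ q : ℚ, exp (2 * Real.pi * I * q) = z) ↔ ∃ α : ℚ, b = cos (2 * Real.pi * α) := by
  have exp_eq (q : ℚ) : exp (2 * Real.pi * I * q) = exp ((2 * Real.pi * q : ℂ) * I) := by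
    ring_nf
  constructor
  · rintro ⟨q, rfl⟩
    refine ⟨q, ?_⟩
    rw [exp_eq, exp_mul_I] at hz
    have h : exp ((2 * Real.pi * q : ℂ) * I) * (cos (2 * Real.pi * q) - b) = 0 := by
      rw [exp_mul_I]
      linear_combination hz / 2 + sin_sq_add_cos_sq (2 * Real.pi * q : ℂ) / 2
        - sin (2 * Real.pi * q : ℂ) ^ 2 * I_sq / 2
    exact (sub_eq_zero.mp ((mul_eq_zero.mp h).resolve_left (exp_ne_zero _))).symm
  · rintro ⟨α, rfl⟩
    have h : (z - exp (2 * Real.pi * I * α)) * (z - exp (2 * Real.pi * I * (-α : ℚ))) = 0 := by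
      rw [exp_eq, exp_eq, exp_mul_I, exp_mul_I, Rat.cast_neg, mul_neg, cos_neg, sin_neg]
      linear_combination hz + sin_sq_add_cos_sq (2 * Real.pi * α : ℂ)
        - sin (2 * Real.pi * α : ℂ) ^ 2 * I_sq
    rcases mul_eq_zero.mp h with h | h
    · exact ⟨α, (sub_eq_zero.mp h).symm⟩
    · exact ⟨-α, (sub_eq_zero.mp h).symm⟩

end Complex

/-- **Intersection points of sections of `S₂` lie over `R_∞`.**
Let `xₙ, yₙ ∈ ℂ[t]` be defined by `xₙ + yₙ·w = (t + w)ⁿ` in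
`ℂ[t][w]/(w² − (t² − 1))`.  For `b ∈ ℂ` with `b² ≠ 1`, two distinct sections
meet over `b` (i.e. `xₘ(b) = xₙ(b)` and `yₘ(b) = yₙ(b)` for some `m ≠ n`)
iff `b = cos(2πα)` for some rational `α`. -/
theorem pell_sections_intersect_iff_cyclotomic
    (x y : ℕ → Polynomial ℂ)
    (hxy : ∀ n : ℕ, pellElem2C (x n) (y n) = (pellElem2C (X : Polynomial ℂ) 1) ^ n)
    (b : ℂ) (hb : b ^ 2 ≠ 1) :
    (∃ m n : ℕ, m ≠ n ∧ (x m).eval b = (x n).eval b ∧ (y m).eval b = (y n).eval b) ↔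
    (∃ α : ℚ, b = Complex.cos (2 * Real.pi * α)) := by
  obtain ⟨c, hc⟩ := IsAlgClosed.exists_pow_nat_eq (b ^ 2 - 1) two_pos
  have hc0 : c ≠ 0 := by
    rintro rfl
    exact hb (by linear_combination -hc)
  have hz0 : b + c ≠ 0 := left_ne_zero_of_mul_eq_one (b := b - c) (by linear_combination -hc)
  calc _ ↔ ∃ m n : ℕ, m ≠ n ∧ (b + c) ^ m = (b + c) ^ n := by
        simp only [eval_eq_and_eval_eq_iff_pow_eq_pow hxy hc hc0]
    _ ↔ IsOfFinOrder (b + c) := exists_pow_eq_pow_iff_isOfFinOrder hz0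
    _ ↔ ∃ q : ℚ, Complex.exp (2 * Real.pi * Complex.I * q) = b + c :=
        Complex.isOfFinOrder_iff_exists_rat_exp
    _ ↔ _ := Complex.exists_rat_exp_eq_iff_exists_rat_cos_eq (by linear_combination hc)
end

section
/- Let g ∈ ℂ[u] be a nonconstant polynomial and (φ₁, ψ₁) ∈ ℂ[u]² a nontrivial solution of φ₁² − g·ψ₁² = 1 (i.e., ψ₁ ≠ 0). Then for every natural number N there exist b, s ∈ ℂ with s² = g(b) such that φ₁(b) + ψ₁(b)·s is a root of unity of order greater than N. (A Pell surface over ℂ with a nontrivial section has infinitely many cyclotomic fibers, of unbounded order.) -/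
/-!
Since `ψ₁ ≠ 0` and `g` is nonconstant, the Pell equation forces `φ₁` to be nonconstant, so
`φ₁` takes every complex value. Given a primitive root of unity `ζ` of order `r ≥ 3`, choose
`b` with `φ₁(b) = (ζ + ζ⁻¹)/2`; as `ζ ≠ ±1`, `φ₁(b)² ≠ 1`, hence `ψ₁(b) ≠ 0`. Then `ζ` is a
root of `T² − 2φ₁(b)T + 1`, whose roots are the two values `φ₁(b) ± ψ₁(b)·√g(b)`, so
`ζ = φ₁(b) + ψ₁(b)·s` for a square root `s` of `g(b)`.
-/

open Polynomial

theorem natDegree_pos_of_sq_sub_mul_sq_eq_one {R : Type*} [CommRing R] [IsDomain R]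
    {g φ ψ : R[X]} (hg : 0 < g.natDegree) (hψ : ψ ≠ 0) (h : φ ^ 2 - g * ψ ^ 2 = 1) :
    0 < φ.natDegree := by
  have hg0 : g ≠ 0 := ne_zero_of_natDegree_gt hg
  have hφsq : φ ^ 2 = g * ψ ^ 2 + C 1 := by rw [C_1]; linear_combination h
  have hdeg : 2 * φ.natDegree = g.natDegree + 2 * ψ.natDegree := by
    rw [← natDegree_pow, hφsq, natDegree_add_C, natDegree_mul hg0 (pow_ne_zero 2 hψ),
      natDegree_pow]
  omega

theorem exists_sq_eq_and_add_mul_eq_of_sq_sub_mul_sq_eq_one {K : Type*} [Field K]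
    {d x y ζ : K} (hζ : ζ ^ 2 ≠ 1) (hroot : ζ ^ 2 - 2 * x * ζ + 1 = 0)
    (h : x ^ 2 - d * y ^ 2 = 1) : ∃ s, s ^ 2 = d ∧ x + y * s = ζ := by
  have hsq : (ζ - x) ^ 2 = d * y ^ 2 := by linear_combination hroot + h
  have hy : y ≠ 0 := by
    rintro rfl
    have hζx : ζ = x := sub_eq_zero.mp (pow_eq_zero_iff two_ne_zero |>.mp (by simpa using hsq))
    exact hζ (by linear_combination (ζ + x) * hζx + h)
  refine ⟨(ζ - x) / y, ?_, ?_⟩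
  · rw [div_pow, hsq, mul_div_cancel_right₀ d (pow_ne_zero 2 hy)]
  · rw [mul_div_cancel₀ _ hy, add_sub_cancel]

/-- **Cyclotomic fibers of unbounded order.**  Let `g ∈ ℂ[u]` be nonconstant
and `(φ₁, ψ₁)` a nontrivial solution of `φ₁² − g·ψ₁² = 1`.  Then for every `N`
there are `b, s ∈ ℂ` with `s² = g(b)` such that `φ₁(b) + ψ₁(b)·s` is a root of
unity of order greater than `N`. -/
theorem pell_cyclotomic_fibers_unbounded
    (g : Polynomial ℂ) (hg : 0 < g.natDegree)
    (φ₁ ψ₁ : Polynomial ℂ) (hψ : ψ₁ ≠ 0)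
    (hsol : φ₁ ^ 2 - g * ψ₁ ^ 2 = 1) (N : ℕ) :
    ∃ b s : ℂ, s ^ 2 = g.eval b ∧
      ∃ r : ℕ, N < r ∧ (φ₁.eval b + ψ₁.eval b * s) ^ r = 1 ∧
        ∀ j : ℕ, 0 < j → j < r → (φ₁.eval b + ψ₁.eval b * s) ^ j ≠ 1 := by
  obtain ⟨ζ, hζ⟩ : ∃ ζ : ℂ, IsPrimitiveRoot ζ (N + 3) :=
    ⟨_, Complex.isPrimitiveRoot_exp _ (by omega)⟩
  have hζ0 : ζ ≠ 0 := hζ.ne_zero (by omega)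
  obtain ⟨b, hb⟩ : ∃ b, φ₁.eval b = (ζ + ζ⁻¹) / 2 := IsAlgClosed.eval_surjective
    (natDegree_pos_of_sq_sub_mul_sq_eq_one hg hψ hsol).ne' ((ζ + ζ⁻¹) / 2)
  have hroot : ζ ^ 2 - 2 * φ₁.eval b * ζ + 1 = 0 := by
    rw [hb]
    field_simp
    ring
  have hfiber : φ₁.eval b ^ 2 - g.eval b * ψ₁.eval b ^ 2 = 1 := by
    simpa using congrArg (eval b) hsol
  obtain ⟨s, hs, hζs⟩ := exists_sq_eq_and_add_mul_eq_of_sq_sub_mul_sq_eq_one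
    (hζ.pow_ne_one_of_pos_of_lt two_ne_zero (by omega)) hroot hfiber
  refine ⟨b, s, hs, N + 3, by omega, ?_⟩
  rw [hζs]
  exact ⟨hζ.pow_eq_one, fun j hj hjr => hζ.pow_ne_one_of_pos_of_lt hj.ne' hjr⟩
end

section
/- Let k be an algebraically closed field of characteristic ≠ 2 and x ∈ k[u] a polynomial whose derivative x′ is not identically 0. Then the polynomial x² − 1 has at least 2 simple roots; that is, there exist a ≠ b in k such that the root multiplicity of a in x² − 1 equals 1 and the root multiplicity of b in x² − 1 equals 1. -/
/-!
If `x² − 1` has roots `aᵢ` of multiplicities `mᵢ`, then `∑ mᵢ = 2 deg x` since `k` is algebraically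
closed. At each `aᵢ` we have `x(aᵢ) ≠ 0`, so `(x² − 1)' = 2 x x'` shows `mᵢ − 1 ≤ ord_{aᵢ} x'`, whence
`∑ (mᵢ − 1) ≤ deg x' < deg x`. A multiple root has `mᵢ ≤ 2 (mᵢ − 1)`, so the simple roots number at
least `2 deg x − 2 (deg x − 1) = 2`.
-/

open Polynomial Finset

namespace Multiset

variable {α : Type*} [DecidableEq α]

theorem card_le_card_filter_count_eq_one_add_two_mul_card_sub_dedup (s : Multiset α) :
    card s ≤ #{a ∈ s.toFinset | s.count a = 1} + 2 * card (s - s.dedup) := by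
  have hsplit : card s = s.toFinset.card + card (s - s.dedup) := by
    rw [card_toFinset, ← card_add, add_tsub_cancel_of_le (dedup_le s)]
  have hmultiple : #{a ∈ s.toFinset | ¬s.count a = 1} ≤ card (s - s.dedup) := by
    refine (Finset.card_le_card fun a ha => ?_).trans (toFinset_card_le _)
    simp only [Finset.mem_filter, mem_toFinset] at ha
    rw [mem_toFinset, ← count_pos, count_sub, count_dedup, if_pos ha.1]
    have := count_pos.2 ha.1
    omega
  have := card_filter_add_card_filter_not (fun a => s.count a = 1) (s := s.toFinset)
  omega

end Multiset

namespace Polynomial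

variable {R : Type*} [CommRing R] [IsDomain R]

theorem roots_sub_dedup_le_roots [DecidableEq R] {p q : R[X]}
    (h : ∀ a ∈ p.roots, p.rootMultiplicity a - 1 ≤ q.rootMultiplicity a) :
    p.roots - p.roots.dedup ≤ q.roots :=
  Multiset.le_iff_count.2 fun a => by
    rw [Multiset.count_sub, Multiset.count_dedup]
    split_ifs with ha
    · rw [count_roots, count_roots]
      exact h a ha
    · simp [Multiset.count_eq_zero.2 ha]

theorem rootMultiplicity_sub_one_le_of_derivative_eq_mul {p f g : R[X]} {a : R}
    (hd : derivative p = f * g) (hf : ¬ f.IsRoot a) (hg : g ≠ 0) :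
    p.rootMultiplicity a - 1 ≤ g.rootMultiplicity a := by
  have hfg : f * g ≠ 0 := mul_ne_zero (by rintro rfl; simp at hf) hg
  have := rootMultiplicity_sub_one_le_derivative_rootMultiplicity_of_ne_zero p a (hd ▸ hfg)
  rwa [hd, rootMultiplicity_mul hfg, rootMultiplicity_eq_zero hf, zero_add] at this

end Polynomial

/-- **`x² − 1` has at least two simple roots.**  Over an algebraically closed
field of characteristic `≠ 2`, if the derivative of `x ∈ k[u]` is not
identically zero, then `x² − 1` has at least two simple roots. -/
theorem sq_sub_one_has_two_simple_roots
    {k : Type*} [Field k] [IsAlgClosed k] (h2 : (2 : k) ≠ 0)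
    (x : Polynomial k) (hx : derivative x ≠ 0) :
    ∃ a b : k, a ≠ b ∧
      (x ^ 2 - 1).rootMultiplicity a = 1 ∧
      (x ^ 2 - 1).rootMultiplicity b = 1 := by
  classical
  set p := x ^ 2 - 1
  have hdeg : x.natDegree ≠ 0 := mt derivative_of_natDegree_zero hx
  have hp : Multiset.card p.roots = 2 * x.natDegree := by
    rw [IsAlgClosed.card_roots_eq_natDegree, show p = x ^ 2 - C 1 by simp [p], natDegree_sub_C,
      natDegree_pow, mul_comm]
  have hderiv : Multiset.card (derivative x).roots < x.natDegree :=
    (card_roots' _).trans_lt (natDegree_derivative_lt hdeg)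
  have hmult : p.roots - p.roots.dedup ≤ (derivative x).roots := by
    refine roots_sub_dedup_le_roots fun a ha => ?_
    have hxa : x.eval a ^ 2 = 1 := by
      simpa [p, sub_eq_zero] using (mem_roots'.1 ha).2
    refine rootMultiplicity_sub_one_le_of_derivative_eq_mul (f := C 2 * x) ?_ ?_ hx
    · simp [p, derivative_pow, mul_assoc]
    · have : x.eval a ≠ 0 := by rintro h; simp [h] at hxa
      simp [h2, this]
  have hcount := Multiset.card_le_card_filter_count_eq_one_add_two_mul_card_sub_dedup p.roots
  have hmult_card := Multiset.card_le_card hmult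
  have hsimple : 1 < #{a ∈ p.roots.toFinset | p.roots.count a = 1} := by omega
  obtain ⟨a, ha, b, hb, hab⟩ := one_lt_card.1 hsimple
  simp only [mem_filter, count_roots] at ha hb
  exact ⟨a, b, hab, ha.2, hb.2⟩
end

section
/- Let k be an algebraically closed field of characteristic ≠ 2 and x ∈ k[u] a polynomial whose derivative x′ is not identically 0. Assume that every simple root of x² − 1 belongs to {1, −1}. Then there exists y ∈ k[u] with x² − (u² − 1)·y² = 1; that is, (x, y) is a solution of the Pell equation for g = u² − 1. -/
open Polynomial UniqueFactorizationMonoid EuclideanDomain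

/-!
Write `x² - 1 = r * D` with `r` its radical and `D = (x² - 1) / r`. Since `D` divides the
derivative `2 x x'` and is coprime to `x`, it divides `x'`, so `deg D < deg x` and hence
`deg r ≥ deg D + 2`. Every root of `r` that is not simple in `x² - 1` is a root of `D`, and the
simple ones are `±1`, so `r ∣ (u² - 1) * D`. The degree bound forces `r ~ (u² - 1) * D`, i.e.
`x² - 1 ~ (u² - 1) * D²`, and over an algebraically closed field the unit is a square.
-/

section Radical

variable {E : Type*} [EuclideanDomain E] [NormalizationMonoid E] [UniqueFactorizationMonoid E]
  {a b π : E}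

theorem Prime.dvd_divRadical_of_sq_dvd (hπ : Prime π) (h : π ^ 2 ∣ a) : π ∣ divRadical a := by
  by_contra hD
  rw [← radical_mul_divRadical (a := a)] at h
  have hsq : π * π ∣ radical a := sq π ▸ hπ.pow_dvd_of_dvd_mul_right 2 hD h
  exact hπ.not_isUnit (squarefree_radical π hsq)

theorem radical_dvd_mul_divRadical (hb : b ≠ 0)
    (h : ∀ π, Irreducible π → π ∣ a → ¬π ^ 2 ∣ a → π ∣ b) : radical a ∣ b * divRadical a := by
  rcases eq_or_ne a 0 with rfl | ha
  · simp
  have hbD : b * divRadical a ≠ 0 := mul_ne_zero hb (divRadical_ne_zero ha)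
  rw [radical_dvd_iff_primeFactors_subset hbD]
  intro π hπ
  rw [mem_primeFactors, mem_normalizedFactors_iff' ha] at hπ
  obtain ⟨hirr, hnorm, hdvd⟩ := hπ
  rw [mem_primeFactors, mem_normalizedFactors_iff' hbD]
  refine ⟨hirr, hnorm, ?_⟩
  by_cases hsq : π ^ 2 ∣ a
  · exact dvd_mul_of_dvd_right ((irreducible_iff_prime.mp hirr).dvd_divRadical_of_sq_dvd hsq) b
  · exact dvd_mul_of_dvd_left (h π hirr hdvd hsq) _

end Radical

namespace Polynomial

variable {k : Type*} [Field k]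

theorem natDegree_radical_add_natDegree_divRadical [DecidableEq k] {p : k[X]} (hp : p ≠ 0) :
    (radical p).natDegree + (divRadical p).natDegree = p.natDegree := by
  rw [← natDegree_mul radical_ne_zero (divRadical_ne_zero hp), radical_mul_divRadical]

theorem associated_mul_divRadical_sq [DecidableEq k] {p q : k[X]} (hp : p ≠ 0) (hq : q ≠ 0)
    (hdvd : radical p ∣ q * divRadical p)
    (hdeg : q.natDegree + 2 * (divRadical p).natDegree ≤ p.natDegree) :
    Associated p (q * divRadical p ^ 2) := by
  have hqD : q * divRadical p ≠ 0 := mul_ne_zero hq (divRadical_ne_zero hp)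
  have hle : (q * divRadical p).natDegree ≤ (radical p).natDegree := by
    have := natDegree_radical_add_natDegree_divRadical hp
    rw [natDegree_mul hq (divRadical_ne_zero hp)]
    omega
  have := (associated_of_dvd_of_natDegree_le hdvd hqD hle).mul_right (divRadical p)
  rwa [radical_mul_divRadical, mul_assoc, ← sq] at this

theorem divRadical_sq_sub_one_dvd_derivative [DecidableEq k] (h2 : (2 : k) ≠ 0) (x : k[X]) :
    divRadical (x ^ 2 - 1) ∣ derivative x := by
  have hcop : IsCoprime (divRadical (x ^ 2 - 1)) x :=
    IsCoprime.of_isCoprime_of_dvd_left ⟨-1, x, by ring⟩ (divRadical_dvd_self _)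
  have hder : derivative (x ^ 2 - 1) = C 2 * (x * derivative x) := by
    rw [derivative_sub, derivative_one, derivative_pow]
    simp only [Nat.cast_ofNat, sub_zero, C_ofNat]
    ring
  have h := divRadical_dvd_derivative (x ^ 2 - 1)
  rw [hder, (isUnit_C.mpr h2.isUnit).dvd_mul_left] at h
  exact hcop.dvd_of_dvd_mul_left h

theorem natDegree_sq_sub_one (x : k[X]) : (x ^ 2 - 1).natDegree = 2 * x.natDegree := by
  rw [← C_1, natDegree_sub_C, natDegree_pow]

variable [IsAlgClosed k]

theorem exists_associated_X_sub_C_of_irreducible {π : k[X]} (hπ : Irreducible π) :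
    ∃ a, Associated (X - C a) π := by
  obtain ⟨a, ha⟩ := IsAlgClosed.exists_root π (degree_pos_of_irreducible hπ).ne'
  exact ⟨a, (irreducible_X_sub_C a).associated_of_dvd hπ (dvd_iff_isRoot.mpr ha)⟩

theorem exists_eq_C_sq_mul_of_associated {f g : k[X]} (h : Associated f g) :
    ∃ e : k, f = C e ^ 2 * g := by
  obtain ⟨u, hu⟩ := h.symm
  obtain ⟨c, -, hc⟩ := Polynomial.isUnit_iff.mp u.isUnit
  obtain ⟨e, he⟩ := IsAlgClosed.exists_eq_mul_self c
  exact ⟨e, by rw [← hu, ← hc, he, C_mul, sq, mul_comm]⟩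

theorem radical_dvd_mul_divRadical_of_forall_X_sub_C [DecidableEq k] {p q : k[X]} (hq : q ≠ 0)
    (h : ∀ a, (X - C a) ∣ p → ¬(X - C a) ^ 2 ∣ p → (X - C a) ∣ q) :
    radical p ∣ q * divRadical p := by
  refine radical_dvd_mul_divRadical hq fun π hπ hdvd hsq => ?_
  obtain ⟨a, ha⟩ := exists_associated_X_sub_C_of_irreducible hπ
  rw [← ha.dvd_iff_dvd_left] at hdvd ⊢
  rw [← ha.pow_pow.dvd_iff_dvd_left] at hsq
  exact h a hdvd hsq

end Polynomial

/-- **Polynomials whose simple roots of `x² − 1` are `±1` solve the Pell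
equation.**  Over an algebraically closed field of characteristic `≠ 2`, if
`x′ ≠ 0` and every simple root of `x² − 1` lies in `{1, −1}`, then
`x² − (u² − 1)·y² = 1` for some `y ∈ k[u]`. -/
theorem pell_from_simple_roots
    {k : Type*} [Field k] [IsAlgClosed k] (h2 : (2 : k) ≠ 0)
    (x : Polynomial k) (hx : derivative x ≠ 0)
    (hsr : ∀ a : k, (X - C a) ∣ (x ^ 2 - 1) → ¬ (X - C a) ^ 2 ∣ (x ^ 2 - 1) →
      a = 1 ∨ a = -1) :
    ∃ y : Polynomial k, x ^ 2 - ((X : Polynomial k) ^ 2 - 1) * y ^ 2 = 1 := by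
  classical
  have hq : (X ^ 2 - 1 : k[X]) ≠ 0 := by simpa using X_pow_sub_C_ne_zero two_pos (1 : k)
  have hxdeg : x.natDegree ≠ 0 := fun h => hx (derivative_of_natDegree_zero h)
  have hp : x ^ 2 - 1 ≠ 0 := fun h => hxdeg (by simpa [h] using natDegree_sq_sub_one x)
  have hrad : radical (x ^ 2 - 1) ∣ (X ^ 2 - 1) * divRadical (x ^ 2 - 1) :=
    radical_dvd_mul_divRadical_of_forall_X_sub_C hq fun a hdvd hsq => by
      rcases hsr a hdvd hsq with rfl | rfl
      exacts [⟨X + 1, by rw [C_1]; ring⟩, ⟨X - 1, by rw [C_neg, C_1]; ring⟩]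
  have hD : (divRadical (x ^ 2 - 1)).natDegree < x.natDegree :=
    (natDegree_le_of_dvd (divRadical_sq_sub_one_dvd_derivative h2 x) hx).trans_lt
      (natDegree_derivative_lt hxdeg)
  have hassoc := associated_mul_divRadical_sq hp hq hrad (by
    rw [natDegree_sq_sub_one X, natDegree_sq_sub_one x, natDegree_X]
    omega)
  obtain ⟨e, he⟩ := exists_eq_C_sq_mul_of_associated hassoc
  exact ⟨C e * divRadical (x ^ 2 - 1), by linear_combination he⟩
end

section
/- Let k be a field of characteristic ≠ 2, c ∈ k a nonzero constant, and h ∈ k[u] any polynomial, and set g = c·h². If x, y, u ∈ k[t] satisfy x(t)² − g(u(t))·y(t)² = 1, then x(t) is a constant polynomial and h(u(t))·y(t) is a constant polynomial. (If g is a constant times a square, the only possibly-singular affine lines on the Pell surface S_g are the obvious ones.) -/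
/-!
Over an algebraic closure `c = d²`, so `x² − c·w² = (x − d·w)(x + d·w) = 1` with `w = h(u)·y`.
Both factors are units of a polynomial ring over a domain, hence constants, and since `2 ≠ 0`
so are their half-sum `x` and half-difference `d·w`.
-/

open Polynomial

namespace Polynomial

theorem natDegree_eq_zero_of_C_mul_eq_add {R : Type*} [CommRing R] [IsDomain R] {a : R}
    (ha : a ≠ 0) {p q r : R[X]} (hq : q.natDegree = 0) (hr : r.natDegree = 0)
    (h : C a * p = q + r) : p.natDegree = 0 := by
  rw [← natDegree_C_mul ha, h]
  exact Nat.le_zero.mp <| (natDegree_add_le q r).trans (by simp [hq, hr])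

theorem natDegree_eq_zero_of_sq_sub_sq_eq_one {R : Type*} [CommRing R] [IsDomain R]
    (h2 : (2 : R) ≠ 0) {p q : R[X]} (h : p ^ 2 - q ^ 2 = 1) :
    p.natDegree = 0 ∧ q.natDegree = 0 := by
  have hfactor : (p - q) * (p + q) = 1 := by linear_combination h
  have hsub : (p - q).natDegree = 0 := natDegree_eq_zero_of_isUnit (.of_mul_eq_one _ hfactor)
  have hadd : (p + q).natDegree = 0 :=
    natDegree_eq_zero_of_isUnit (.of_mul_eq_one _ (by rwa [mul_comm] at hfactor))
  refine ⟨natDegree_eq_zero_of_C_mul_eq_add h2 hsub hadd ?_,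
    natDegree_eq_zero_of_C_mul_eq_add h2 hadd (natDegree_neg (p - q) ▸ hsub) ?_⟩ <;>
  · rw [show (C 2 : R[X]) = 2 from rfl]; ring

theorem natDegree_eq_zero_of_sq_sub_C_mul_sq_eq_one {K : Type*} [Field K] (h2 : (2 : K) ≠ 0)
    {c : K} (hc : c ≠ 0) {x w : K[X]} (h : x ^ 2 - C c * w ^ 2 = 1) :
    x.natDegree = 0 ∧ w.natDegree = 0 := by
  let f := algebraMap K (AlgebraicClosure K)
  obtain ⟨d, hd⟩ := IsAlgClosed.exists_eq_mul_self (f c)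
  have hd0 : d ≠ 0 := by
    rintro rfl
    exact hc (f.injective (by simpa using hd))
  have hmap : (x.map f) ^ 2 - (C d * w.map f) ^ 2 = 1 := by
    have := congrArg (map f) h
    simp only [Polynomial.map_sub, Polynomial.map_mul, Polynomial.map_pow, map_C, hd,
      Polynomial.map_one] at this
    rw [← this, C_mul]
    ring
  have := natDegree_eq_zero_of_sq_sub_sq_eq_one (by rwa [← map_ofNat f 2, _root_.map_ne_zero]) hmap
  rwa [natDegree_C_mul hd0, natDegree_map, natDegree_map] at this

end Polynomial

/-- **Only obvious affine lines when `g` is a constant times a square.**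
Let `g = c·h²` with `c ≠ 0`.  If `x, y, u ∈ k[t]` satisfy
`x(t)² − g(u(t))·y(t)² = 1`, then `x` and `h(u(t))·y(t)` are constants. -/
theorem pell_const_times_square_trivial
    {k : Type*} [Field k] (h2 : (2 : k) ≠ 0)
    (c : k) (hc : c ≠ 0) (h : Polynomial k)
    (g : Polynomial k) (hgdef : g = C c * h ^ 2)
    (x y u : Polynomial k)
    (hPell : x ^ 2 - g.comp u * y ^ 2 = 1) :
    (∃ a : k, x = C a) ∧ (∃ b : k, h.comp u * y = C b) := by
  have hEq : x ^ 2 - C c * (h.comp u * y) ^ 2 = 1 := by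
    rw [← hPell, hgdef, mul_comp, C_comp, pow_comp]
    ring
  obtain ⟨hx, hw⟩ := natDegree_eq_zero_of_sq_sub_C_mul_sq_eq_one h2 hc hEq
  exact ⟨⟨_, eq_C_of_natDegree_eq_zero hx⟩, ⟨_, eq_C_of_natDegree_eq_zero hw⟩⟩
end

section
/- Let k be a field and let φ₁, φ₂ ∈ k⟦s⟧ be formal power series with zero constant term, with φ₁ ≠ 0, and with nonzero derivatives φ₁′ ≠ 0 and φ₂′ ≠ 0. Then ord((φ₂ ∘ φ₁)′) = ord(φ₂′)·ord(φ₁) + ord(φ₁′), where φ₂ ∘ φ₁ denotes the substitution of φ₁ into φ₂. (For morphisms of smooth pointed curves this is the composition formula 𝔡(g₂ ∘ g₁) = 𝔡(g₂)·e(g₁) + 𝔡(g₁) for the local discriminant in terms of the ramification index.) -/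
/-!
`psComp` is Mathlib's `PowerSeries.subst`, for which the chain rule
`(φ₂ ∘ φ₁)′ = (φ₂′ ∘ φ₁) · φ₁′` is available. Over a domain the order is additive on products,
and it is multiplicative under substitution: writing `f = X ^ d * u` with `u` a unit gives
`f ∘ g = g ^ d * (u ∘ g)`, where `u ∘ g` is again a unit because `g` has zero constant term.
-/

open PowerSeries

/-- Substitution of a power series `φ₁` with zero constant term into a power
series `φ₂`: the coefficient of `sⁿ` in `φ₂ ∘ φ₁` is
`∑_{j ≤ n} (coeff j φ₂)·(coeff n φ₁ʲ)`.  (For `j > n` the coefficient of `sⁿ`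
in `φ₁ʲ` vanishes since `φ₁` has zero constant term.) -/
noncomputable def psComp {k : Type*} [CommRing k] (φ₂ φ₁ : PowerSeries k) :
    PowerSeries k :=
  PowerSeries.mk fun n =>
    ∑ j ∈ Finset.range (n + 1),
      PowerSeries.coeff j φ₂ * PowerSeries.coeff n (φ₁ ^ j)

namespace PowerSeries

variable {R : Type*} [CommRing R]

theorem coeff_pow_of_lt_of_constantCoeff_eq_zero {g : R⟦X⟧} (hg : constantCoeff g = 0)
    {n d : ℕ} (h : n < d) : coeff n (g ^ d) = 0 :=
  coeff_of_lt_order n <|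
    (Nat.cast_lt.mpr h).trans_le (le_order_pow_of_constantCoeff_eq_zero d hg)

theorem constantCoeff_subst_of_constantCoeff_eq_zero {g : R⟦X⟧} (hg : constantCoeff g = 0)
    (f : R⟦X⟧) : constantCoeff (subst g f) = constantCoeff f := by
  rw [← coeff_zero_eq_constantCoeff_apply, coeff_subst' (HasSubst.of_constantCoeff_zero' hg),
    finsum_eq_single _ 0 fun d hd => by
      rw [coeff_pow_of_lt_of_constantCoeff_eq_zero hg (Nat.pos_of_ne_zero hd), smul_zero]]
  simp

theorem order_subst [IsDomain R] {g : R⟦X⟧} (hg : constantCoeff g = 0) (f : R⟦X⟧) :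
    order (subst g f) = f.order * g.order := by
  have hg' : HasSubst g := HasSubst.of_constantCoeff_zero' hg
  rcases eq_or_ne f 0 with rfl | hf
  · have hzero : (subst g (0 : R⟦X⟧) : R⟦X⟧) = 0 := by rw [← coe_substAlgHom hg', map_zero]
    rw [hzero, order_zero, ENat.top_mul (order_ne_zero_iff_constCoeff_eq_zero.mpr hg)]
  have hsplit : (subst g f : R⟦X⟧) = g ^ f.order.toNat * subst g (divXPowOrder f) := by
    conv_lhs => rw [← X_pow_order_mul_divXPowOrder (f := f)]
    rw [subst_mul hg', subst_pow hg', subst_X hg']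
  have hunit : order (subst g (divXPowOrder f)) = 0 := by
    refine not_ne_iff.mp (mt order_ne_zero_iff_constCoeff_eq_zero.mp ?_)
    rw [constantCoeff_subst_of_constantCoeff_eq_zero hg]
    exact constantCoeff_divXPowOrder_eq_zero_iff.not.mpr hf
  rw [hsplit, order_mul, order_pow, hunit, add_zero, nsmul_eq_mul,
    ENat.natCast_toNat (order_eq_top.not.mpr hf)]

end PowerSeries

theorem psComp_eq_subst {R : Type*} [CommRing R] {g : R⟦X⟧} (hg : constantCoeff g = 0)
    (f : R⟦X⟧) : psComp f g = subst g f := by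
  ext n
  rw [coeff_subst' (HasSubst.of_constantCoeff_zero' hg), psComp, coeff_mk,
    finsum_eq_sum_of_support_subset _ (s := Finset.range (n + 1))]
  · simp only [smul_eq_mul]
  · intro d hd
    by_contra hdn
    simp only [Finset.coe_range, Set.mem_Iio, not_lt] at hdn
    exact hd (by simp [coeff_pow_of_lt_of_constantCoeff_eq_zero hg (Nat.lt_of_succ_le hdn)])

theorem order_derivative_comp_general
    {k : Type*} [Field k] (φ₁ φ₂ : PowerSeries k)
    (h1c : PowerSeries.constantCoeff φ₁ = 0) :
    (psComp φ₂ φ₁).derivativeFun.order =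
      φ₂.derivativeFun.order * φ₁.order + φ₁.derivativeFun.order := by
  change (d⁄dX k (psComp φ₂ φ₁)).order = (d⁄dX k φ₂).order * φ₁.order + (d⁄dX k φ₁).order
  rw [psComp_eq_subst h1c, derivative_subst (HasSubst.of_constantCoeff_zero' h1c), order_mul,
    order_subst h1c]

/-- **Composition formula for the local discriminant.**  For formal power
series `φ₁, φ₂` with zero constant term, `φ₁ ≠ 0` and `φ₁′, φ₂′ ≠ 0`, one has
`ord((φ₂ ∘ φ₁)′) = ord(φ₂′)·ord(φ₁) + ord(φ₁′)`. -/
theorem order_derivative_comp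
    {k : Type*} [Field k] (φ₁ φ₂ : PowerSeries k)
    (h1c : PowerSeries.constantCoeff φ₁ = 0)
    (h2c : PowerSeries.constantCoeff φ₂ = 0)
    (h1 : φ₁ ≠ 0)
    (h1d : φ₁.derivativeFun ≠ 0) (h2d : φ₂.derivativeFun ≠ 0) :
    (psComp φ₂ φ₁).derivativeFun.order =
      φ₂.derivativeFun.order * φ₁.order + φ₁.derivativeFun.order :=
  order_derivative_comp_general φ₁ φ₂ h1c
end

section
/- Let R_∞ = {cos(2πα) : α ∈ ℚ} ⊂ ℂ. Let a, b ∈ ℂ with a ≠ 0, and suppose the affine map z ↦ a·z + b maps R_∞ into R_∞ (i.e., for every α ∈ ℚ there exists β ∈ ℚ with a·cos(2πα) + b = cos(2πβ)). Then b = 0 and a = ±1. -/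
/-!
Every element of `R_∞` is `(ζ + ζ⁻¹)/2` for a root of unity `ζ`, so `a` and `b` are algebraic
and `K = ℚ(a, b)` is a number field. If `cos(2πq) ∈ K` with `q` of denominator `n`, then the
primitive `n`-th root of unity `ζ` is quadratic over `K`, so `φ(n) ≤ 2[K:ℚ]`; since
`n ≤ 2φ(n)²`, the set `R_∞ ∩ K` is finite. The map `z ↦ az + b` sends it to itself, hence so do
its iterates, which send the pair `(1, -1)` to pairs of points of `R_∞ ∩ K` with difference
`2aᵐ`. Finitely many values of `aᵐ` force `‖a‖ = 1`, and then `a ± b ∈ [-1, 1]` together with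
the parallelogram law forces `b = 0`, so `a ∈ R_∞` has modulus one.
-/

open Polynomial IntermediateField Module Complex
open scoped Pointwise

namespace Nat

theorem le_totient_sq_of_odd {n : ℕ} (hn : Odd n) : n ≤ φ n ^ 2 := by
  induction n using Nat.recOnPosPrimePosCoprime with
  | prime_pow p k hp hk =>
    obtain ⟨j, rfl⟩ : ∃ j, k = j + 1 := ⟨k - 1, by omega⟩
    have hp3 : 3 ≤ p := by
      have : p ≠ 2 := by
        rintro rfl
        rw [Nat.odd_pow_iff (Nat.succ_ne_zero j)] at hn
        exact Nat.not_odd_iff_even.2 even_two hn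
      have := hp.two_le
      omega
    have hsq : p ≤ (p - 1) ^ 2 := by
      obtain ⟨q, rfl⟩ : ∃ q, p = q + 1 := ⟨p - 1, by omega⟩
      simp only [Nat.add_sub_cancel]
      nlinarith
    have hpj : 1 ≤ p ^ j := Nat.one_le_pow _ _ hp.pos
    rw [totient_prime_pow_succ hp, pow_succ]
    calc p ^ j * p ≤ p ^ j * (p ^ j * (p - 1) ^ 2) :=
          Nat.mul_le_mul_left _ (hsq.trans (Nat.le_mul_of_pos_left _ hpj))
      _ = (p ^ j * (p - 1)) ^ 2 := by ring
  | zero => simp at hn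
  | one => simp
  | coprime a b _ _ hab iha ihb =>
    rw [Nat.odd_mul] at hn
    rw [totient_mul hab, mul_pow]
    exact Nat.mul_le_mul (iha hn.1) (ihb hn.2)

theorem le_two_mul_totient_sq (n : ℕ) : n ≤ 2 * φ n ^ 2 := by
  rcases eq_or_ne n 0 with rfl | hn
  · simp
  obtain ⟨k, m, hm, rfl⟩ := exists_eq_two_pow_mul_odd hn
  have hcop : Coprime (2 ^ k) m := (Nat.coprime_two_left.2 hm).pow_left k
  have htwo : 2 ^ k ≤ 2 * φ (2 ^ k) ^ 2 := by
    rcases k with _ | j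
    · simp
    · rw [totient_prime_pow_succ prime_two, pow_succ]
      have := Nat.one_le_two_pow (n := j)
      nlinarith
  rw [totient_mul hcop, mul_pow, ← mul_assoc]
  exact Nat.mul_le_mul htwo (le_totient_sq_of_odd hm)

end Nat

theorem minpoly_natDegree_le_two_of_add_inv {K L : Type*} [Field K] [Field L] [Algebra K L]
    {ζ : L} (hζ : ζ ≠ 0) (s : K) (hs : algebraMap K L s = ζ + ζ⁻¹) :
    (minpoly K ζ).natDegree ≤ 2 := by
  have hp : (X ^ 2 - C s * X + 1 : K[X]) ≠ 0 := by
    intro h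
    simpa using congrArg (coeff · 0) h
  have hroot : aeval ζ (X ^ 2 - C s * X + 1 : K[X]) = 0 := by
    simp only [map_add, map_sub, map_mul, map_pow, aeval_X, aeval_C, map_one, hs]
    field_simp
    ring
  rw [natDegree_le_iff_degree_le]
  exact (minpoly.degree_le_of_ne_zero K ζ hp hroot).trans (by compute_degree!)

theorem IsPrimitiveRoot.totient_le_two_mul_finrank {L : Type*} [Field L] [CharZero L]
    {K : IntermediateField ℚ L} [FiniteDimensional ℚ K] {ζ : L} {n : ℕ}
    (hζ : IsPrimitiveRoot ζ n) (hn : 0 < n) (hK : ζ + ζ⁻¹ ∈ K) :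
    n.totient ≤ 2 * finrank ℚ K := by
  have hint : IsIntegral K ζ := (hζ.isIntegral hn).tower_top
  have hquad : finrank K K⟮ζ⟯ ≤ 2 := by
    rw [adjoin.finrank hint]
    exact minpoly_natDegree_le_two_of_add_inv (hζ.ne_zero hn.ne') ⟨_, hK⟩ rfl
  have : FiniteDimensional K K⟮ζ⟯ := adjoin.finiteDimensional hint
  have : FiniteDimensional ℚ K⟮ζ⟯ := FiniteDimensional.trans ℚ K K⟮ζ⟯
  have hdeg := minpoly.natDegree_le (A := ℚ) (⟨ζ, mem_adjoin_simple_self K ζ⟩ : K⟮ζ⟯)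
  rw [← minpoly.algebraMap_eq (algebraMap K⟮ζ⟯ L).injective] at hdeg
  calc n.totient = (minpoly ℚ ζ).natDegree := by
        rw [← cyclotomic_eq_minpoly_rat hζ hn, natDegree_cyclotomic]
    _ ≤ finrank ℚ K * finrank K K⟮ζ⟯ := hdeg.trans (finrank_mul_finrank ℚ K K⟮ζ⟯).ge
    _ ≤ 2 * finrank ℚ K := by rw [mul_comm]; exact Nat.mul_le_mul_right _ hquad

theorem Complex.cos_two_pi_rat_eq (q : ℚ) :
    cos (2 * Real.pi * q) = (exp (2 * Real.pi * I * q) + (exp (2 * Real.pi * I * q))⁻¹) / 2 := by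
  rw [cos, ← exp_neg]
  ring_nf

def Rinfty : Set ℂ := Set.range fun q : ℚ => Complex.cos (2 * Real.pi * q)

theorem zero_mem_Rinfty : (0 : ℂ) ∈ Rinfty := ⟨1 / 4, by
  dsimp only
  rw [show 2 * (Real.pi : ℂ) * ((1 / 4 : ℚ) : ℂ) = ((Real.pi / 2 : ℝ) : ℂ) by push_cast; ring,
    ← ofReal_cos, Real.cos_pi_div_two, ofReal_zero]⟩

theorem one_mem_Rinfty : (1 : ℂ) ∈ Rinfty := ⟨0, by simp⟩

theorem neg_one_mem_Rinfty : (-1 : ℂ) ∈ Rinfty := ⟨1 / 2, by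
  dsimp only
  rw [show 2 * (Real.pi : ℂ) * ((1 / 2 : ℚ) : ℂ) = Real.pi by push_cast; ring, cos_pi]⟩

theorem exists_real_cos_eq_of_mem_Rinfty {x : ℂ} (hx : x ∈ Rinfty) :
    ∃ t : ℝ, x = Real.cos t := by
  obtain ⟨q, rfl⟩ := hx
  exact ⟨2 * Real.pi * q, by push_cast; rfl⟩

theorem norm_le_one_of_mem_Rinfty {x : ℂ} (hx : x ∈ Rinfty) : ‖x‖ ≤ 1 := by
  obtain ⟨t, rfl⟩ := exists_real_cos_eq_of_mem_Rinfty hx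
  rw [norm_real, Real.norm_eq_abs]
  exact Real.abs_cos_le_one t

theorem eq_one_or_eq_neg_one_of_mem_Rinfty {x : ℂ} (hx : x ∈ Rinfty) (h : ‖x‖ = 1) :
    x = 1 ∨ x = -1 := by
  obtain ⟨t, rfl⟩ := exists_real_cos_eq_of_mem_Rinfty hx
  rw [norm_real, Real.norm_eq_abs, abs_eq zero_le_one] at h
  rcases h with h | h <;> simp [h]

theorem isIntegral_of_mem_Rinfty {x : ℂ} (hx : x ∈ Rinfty) : IsIntegral ℚ x := by
  obtain ⟨q, rfl⟩ := hx
  have hζ := isPrimitiveRoot_exp_rat q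
  have hint (ζ : ℂ) (hζ : IsPrimitiveRoot ζ q.den) : IsIntegral ℚ ζ :=
    (hζ.isIntegral q.pos).tower_top
  dsimp only
  rw [cos_two_pi_rat_eq]
  simpa [div_eq_mul_inv] using
    ((hint _ hζ).add (hint _ hζ.inv)).mul (isIntegral_algebraMap (x := (2⁻¹ : ℚ)))

theorem finite_Rinfty_inter (K : IntermediateField ℚ ℂ) [FiniteDimensional ℚ K] :
    (Rinfty ∩ K).Finite := by
  set N := 2 * (2 * finrank ℚ K) ^ 2
  have hsub : Rinfty ∩ K ⊆ (fun ζ => (ζ + ζ⁻¹) / 2) ''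
      ⋃ n ∈ Finset.range (N + 1), (primitiveRoots n ℂ : Set ℂ) := by
    rintro _ ⟨⟨q, rfl⟩, hK⟩
    dsimp only at hK
    have hζ := isPrimitiveRoot_exp_rat q
    have hden : q.den ≤ N := by
      have h2K : exp (2 * Real.pi * I * q) + (exp (2 * Real.pi * I * q))⁻¹ ∈ K := by
        rw [cos_two_pi_rat_eq] at hK
        simpa using mul_mem hK (IntermediateField.natCast_mem K 2)
      calc q.den ≤ 2 * q.den.totient ^ 2 := Nat.le_two_mul_totient_sq _
        _ ≤ N := Nat.mul_le_mul_left _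
          (Nat.pow_le_pow_left (hζ.totient_le_two_mul_finrank q.pos h2K) 2)
    refine ⟨_, Set.mem_biUnion (Finset.mem_range.2 (Nat.lt_succ_of_le hden)) ?_,
      (cos_two_pi_rat_eq q).symm⟩
    exact (mem_primitiveRoots q.pos).2 hζ
  refine Set.Finite.subset (Set.Finite.image _ ?_) hsub
  exact (Finset.range (N + 1)).finite_toSet.biUnion fun n _ => (primitiveRoots n ℂ).finite_toSet

theorem pow_mul_sub_mem_sub_of_mapsTo {R : Type*} [CommRing R] {F : Set R} {a b x y : R}
    (hF : Set.MapsTo (fun z => a * z + b) F F) (hx : x ∈ F) (hy : y ∈ F) (m : ℕ) :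
    a ^ m * (x - y) ∈ F - F := by
  induction m with
  | zero => simpa using Set.sub_mem_sub hx hy
  | succ m ih =>
    obtain ⟨z, hz, w, hw, hzw⟩ := ih
    refine ⟨_, hF hz, _, hF hw, ?_⟩
    simp only
    linear_combination a * hzw

theorem norm_eq_one_of_finite_range_pow_mul {𝕜 : Type*} [NormedDivisionRing 𝕜] {a c : 𝕜}
    (ha : a ≠ 0) (hc : c ≠ 0) (h : (Set.range fun m : ℕ => a ^ m * c).Finite) : ‖a‖ = 1 := by
  by_contra h1
  refine Set.infinite_range_of_injective (fun i j hij => ?_) h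
  have := congrArg norm hij
  simp only [norm_mul, norm_pow] at this
  exact pow_right_injective₀ (norm_pos_iff.2 ha) h1
    (mul_right_cancel₀ (norm_ne_zero_iff.2 hc) this)

theorem eq_zero_of_norm_add_le_of_norm_sub_le {E : Type*} [NormedAddCommGroup E]
    [InnerProductSpace ℝ E] {x y : E} (h₁ : ‖x + y‖ ≤ ‖x‖) (h₂ : ‖x - y‖ ≤ ‖x‖) : y = 0 := by
  have := parallelogram_law_with_norm ℝ x y
  have : ‖y‖ * ‖y‖ ≤ 0 := by nlinarith [norm_nonneg (x + y), norm_nonneg (x - y)]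
  exact norm_eq_zero.1 (by nlinarith [norm_nonneg y])

/-- **Affine maps preserving `R_∞ = {cos(2πα) : α ∈ ℚ}`.**  If `a ≠ 0` and
`z ↦ a·z + b` maps `R_∞` into itself, then `b = 0` and `a = ±1`. -/
theorem affine_map_preserving_Rinfty
    (a b : ℂ) (ha : a ≠ 0)
    (hmap : ∀ α : ℚ, ∃ β : ℚ,
      a * Complex.cos (2 * Real.pi * α) + b = Complex.cos (2 * Real.pi * β)) :
    b = 0 ∧ (a = 1 ∨ a = -1) := by
  have hmaps : Set.MapsTo (fun z => a * z + b) Rinfty Rinfty := by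
    rintro _ ⟨α, rfl⟩
    obtain ⟨β, hβ⟩ := hmap α
    exact ⟨β, hβ.symm⟩
  have hb : b ∈ Rinfty := by simpa using hmaps zero_mem_Rinfty
  have hab : a + b ∈ Rinfty := by simpa using hmaps one_mem_Rinfty
  have hba : -a + b ∈ Rinfty := by simpa using hmaps neg_one_mem_Rinfty
  have : FiniteDimensional ℚ ℚ⟮a, b⟯ := finiteDimensional_adjoin_pair
    (by simpa using (isIntegral_of_mem_Rinfty hab).sub (isIntegral_of_mem_Rinfty hb))
    (isIntegral_of_mem_Rinfty hb)
  set F := Rinfty ∩ ℚ⟮a, b⟯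
  have hmapsF : Set.MapsTo (fun z => a * z + b) F F := fun z hz =>
    ⟨hmaps hz.1, add_mem (mul_mem (subset_adjoin ℚ _ (by simp)) hz.2) (subset_adjoin ℚ _ (by simp))⟩
  have hpow : Set.range (fun m : ℕ => a ^ m * 2) ⊆ F - F := by
    rintro _ ⟨m, rfl⟩
    simpa [one_add_one_eq_two] using pow_mul_sub_mem_sub_of_mapsTo hmapsF
      ⟨one_mem_Rinfty, one_mem _⟩ ⟨neg_one_mem_Rinfty, neg_mem (one_mem _)⟩ m
  have ha1 : ‖a‖ = 1 := norm_eq_one_of_finite_range_pow_mul ha two_ne_zero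
    (((finite_Rinfty_inter _).sub (finite_Rinfty_inter _)).subset hpow)
  have hb0 : b = 0 := by
    refine eq_zero_of_norm_add_le_of_norm_sub_le (x := a) ?_ ?_ <;> rw [ha1]
    · exact norm_le_one_of_mem_Rinfty hab
    · rw [norm_sub_rev, ← neg_add_eq_sub]
      exact norm_le_one_of_mem_Rinfty hba
  subst hb0
  exact ⟨rfl, eq_one_or_eq_neg_one_of_mem_Rinfty (by simpa using hab) ha1⟩
end

section
/- Let k be a field and c₁, …, c₉ ∈ k pairwise distinct elements; consider the 9 points pᵢ = (cᵢ, cᵢ³) on the plane cubic curve (y − x³ = 0). Then the following are equivalent: (i) there exists a polynomial g₂ ∈ k[x, y] of total degree at most 3 which vanishes at all nine points pᵢ and which is not a scalar multiple of y − x³; (ii) c₁ + c₂ + ⋯ + c₉ = 0. -/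
/-!
Restricting a polynomial `g(x, y)` to the curve along `t ↦ (t, t³)` sends the monomial `xᵃyᵇ`
to `t^(a + 3b)`. For a cubic (`a + b ≤ 3`) this exponent is at most `9` and never `8`, and the
only collision, `x³` and `y`, accounts for the kernel `k · (y - x³)`. Conversely every
polynomial of degree `≤ 9` without `t⁸` term is the restriction of a cubic. Hence a second
cubic through the nine points amounts to a nonzero multiple of `∏ (t - cᵢ)` without `t⁸` term,
and the `t⁸` coefficient of that product is `-∑ cᵢ`.
-/

open MvPolynomial

namespace Polynomial

variable {K ι : Type*} [Field K] [Fintype ι] {c : ι → K}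

theorem eq_C_coeff_card_mul_prod_X_sub_C (hc : Function.Injective c) {p : K[X]}
    (hdeg : p.natDegree ≤ Fintype.card ι) (hroot : ∀ i, p.IsRoot (c i)) :
    p = C (p.coeff (Fintype.card ι)) * ∏ i, (X - C (c i)) := by
  set P := ∏ i, (X - C (c i))
  have hPmonic : P.Monic := monic_prod_of_monic _ _ fun i _ => monic_X_sub_C (c i)
  have hPdeg : P.natDegree = Fintype.card ι := by simp [P]
  obtain ⟨q, rfl⟩ : P ∣ p := Finset.prod_dvd_of_coprime
    ((pairwise_coprime_X_sub_C hc).set_pairwise _) fun i _ => dvd_iff_isRoot.mpr (hroot i)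
  rcases eq_or_ne q 0 with rfl | hq
  · simp
  have hq0 : q.natDegree = 0 := by
    rw [natDegree_mul hPmonic.ne_zero hq, hPdeg] at hdeg
    omega
  rw [eq_C_of_natDegree_eq_zero hq0, coeff_mul_C, ← hPdeg, hPmonic.coeff_natDegree, one_mul,
    mul_comm]

theorem sum_eq_zero_of_isRoot_of_coeff_card_pred_eq_zero (hc : Function.Injective c) {p : K[X]}
    (hp : p ≠ 0) (hdeg : p.natDegree ≤ Fintype.card ι) (hroot : ∀ i, p.IsRoot (c i))
    (hcoeff : p.coeff (Fintype.card ι - 1) = 0) : ∑ i, c i = 0 := by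
  rcases isEmpty_or_nonempty ι with hι | hι
  · simp
  have hlead : p.coeff (Fintype.card ι) ≠ 0 := fun h0 =>
    hp (by rw [eq_C_coeff_card_mul_prod_X_sub_C hc hdeg hroot, h0, C_0, zero_mul])
  rw [eq_C_coeff_card_mul_prod_X_sub_C hc hdeg hroot, coeff_C_mul, ← Finset.card_univ,
    prod_X_sub_C_coeff_card_pred _ _ Finset.univ_nonempty.card_pos] at hcoeff
  simpa [hlead] using hcoeff

end Polynomial

theorem MvPolynomial.apply_zero_add_apply_one_le_totalDegree {R : Type*} [CommSemiring R]
    {g : MvPolynomial (Fin 2) R} {d : Fin 2 →₀ ℕ} (hd : d ∈ g.support) :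
    d 0 + d 1 ≤ g.totalDegree := by
  simpa [Finsupp.sum_fintype, Fin.sum_univ_two] using le_totalDegree hd

noncomputable def restrictToCubic (k : Type*) [Field k] :
    MvPolynomial (Fin 2) k →ₐ[k] Polynomial k :=
  aeval ![Polynomial.X, Polynomial.X ^ 3]

section RestrictToCubic

variable {k : Type*} [Field k]

theorem eval_restrictToCubic (g : MvPolynomial (Fin 2) k) (t : k) :
    (restrictToCubic k g).eval t = eval (fun j : Fin 2 => if j = 0 then t else t ^ 3) g := by
  rw [← Polynomial.coe_aeval_eq_eval, ← AlgHom.comp_apply, restrictToCubic, comp_aeval,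
    ← aeval_eq_eval]
  congr 2
  funext j
  fin_cases j <;> simp

theorem coeff_restrictToCubic_eq_zero {g : MvPolynomial (Fin 2) k} {n : ℕ}
    (h : ∀ d ∈ g.support, d 0 + 3 * d 1 ≠ n) : (restrictToCubic k g).coeff n = 0 := by
  conv_lhs => rw [g.as_sum]
  rw [map_sum, Polynomial.finsetSum_coeff]
  refine Finset.sum_eq_zero fun d hd => ?_
  simp [restrictToCubic, aeval_monomial, Finsupp.prod_fintype, Fin.prod_univ_two, ← pow_mul,
    ← pow_add, Polynomial.coeff_C_mul, Polynomial.coeff_X_pow, (h d hd).symm]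

theorem natDegree_restrictToCubic_le {g : MvPolynomial (Fin 2) k} (hg : g.totalDegree ≤ 3) :
    (restrictToCubic k g).natDegree ≤ 9 :=
  Polynomial.natDegree_le_iff_coeff_eq_zero.mpr fun n hn => coeff_restrictToCubic_eq_zero
    fun d hd => by have := apply_zero_add_apply_one_le_totalDegree hd; omega

theorem coeff_eight_restrictToCubic {g : MvPolynomial (Fin 2) k} (hg : g.totalDegree ≤ 3) :
    (restrictToCubic k g).coeff 8 = 0 :=
  coeff_restrictToCubic_eq_zero fun d hd => by
    have := apply_zero_add_apply_one_le_totalDegree hd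
    omega

/-- In `k[x, y] ⧸ (y - x³)`, substituting `x ↦ t, y ↦ t³` and then `t ↦ x` is the
identity. -/
theorem dvd_of_restrictToCubic_eq_zero {g : MvPolynomial (Fin 2) k}
    (h : restrictToCubic k g = 0) : (X 1 - X 0 ^ 3 : MvPolynomial (Fin 2) k) ∣ g := by
  set mk := Ideal.Quotient.mkₐ k (Ideal.span {(X 1 - X 0 ^ 3 : MvPolynomial (Fin 2) k)})
  have hid : (mk.comp (Polynomial.aeval (X 0))).comp (restrictToCubic k) = mk := by
    ext i
    fin_cases i
    · simp [restrictToCubic]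
    · simp only [restrictToCubic, mk, AlgHom.comp_apply, aeval_X, Fin.mk_one,
        Matrix.cons_val_one, Matrix.cons_val_fin_one, Polynomial.aeval_X_pow,
        Ideal.Quotient.mkₐ_eq_mk, Ideal.Quotient.eq, Ideal.mem_span_singleton]
      rw [← neg_sub]
      exact neg_dvd.mpr dvd_rfl
  rw [← Ideal.mem_span_singleton, ← Ideal.Quotient.eq_zero_iff_mem]
  simpa [h, mk] using (DFunLike.congr_fun hid g).symm

theorem totalDegree_X_sub_X_pow_three :
    (X 1 - X 0 ^ 3 : MvPolynomial (Fin 2) k).totalDegree = 3 := by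
  refine le_antisymm ?_ ?_
  · refine (totalDegree_sub _ _).trans (max_le ?_ ?_) <;> simp [totalDegree_X_pow]
  · have hmem : Finsupp.single 0 3 ∈ (X 1 - X 0 ^ 3 : MvPolynomial (Fin 2) k).support := by
      simp [coeff_X, coeff_X_pow, Finsupp.single_eq_single_iff]
    simpa using le_totalDegree hmem

theorem exists_eq_C_mul_of_restrictToCubic_eq_zero {g : MvPolynomial (Fin 2) k}
    (hg : g.totalDegree ≤ 3) (h : restrictToCubic k g = 0) :
    ∃ l : k, g = C l * (X 1 - X 0 ^ 3) := by
  obtain ⟨q, rfl⟩ := dvd_of_restrictToCubic_eq_zero h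
  rcases eq_or_ne q 0 with rfl | hq
  · exact ⟨0, by simp⟩
  have hcubic : (X 1 - X 0 ^ 3 : MvPolynomial (Fin 2) k) ≠ 0 := by
    intro h0; simpa [h0] using (totalDegree_X_sub_X_pow_three (k := k))
  rw [totalDegree_mul_of_isDomain hcubic hq, totalDegree_X_sub_X_pow_three] at hg
  exact ⟨q.coeff 0, by rw [mul_comm, ← totalDegree_eq_zero_iff_eq_C.mp (by omega)]⟩

noncomputable def liftToCubic (p : Polynomial k) : MvPolynomial (Fin 2) k :=
  ∑ n ∈ (Finset.range 10).erase 8, C (p.coeff n) * X 0 ^ (n % 3) * X 1 ^ (n / 3)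

theorem totalDegree_liftToCubic_le (p : Polynomial k) : (liftToCubic p).totalDegree ≤ 3 := by
  refine (totalDegree_finsetSum _ _).trans (Finset.sup_le fun n hn => ?_)
  have hn' : n % 3 + n / 3 ≤ 3 := by
    have := Finset.mem_erase.mp hn
    rw [Finset.mem_range] at this
    omega
  refine (totalDegree_mul _ _).trans ?_
  refine (add_le_add ((totalDegree_mul _ _).trans (add_le_add (totalDegree_C _).le
    (totalDegree_X_pow _ _).le)) (totalDegree_X_pow _ _).le).trans ?_
  simpa using hn'

theorem restrictToCubic_liftToCubic {p : Polynomial k} (hdeg : p.natDegree ≤ 9)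
    (h8 : p.coeff 8 = 0) : restrictToCubic k (liftToCubic p) = p := by
  have hterm : ∀ n, restrictToCubic k (C (p.coeff n) * X 0 ^ (n % 3) * X 1 ^ (n / 3)) =
      Polynomial.monomial n (p.coeff n) := fun n => by
    simp [restrictToCubic, ← pow_mul, mul_assoc, ← pow_add, Nat.mod_add_div,
      Polynomial.C_mul_X_pow_eq_monomial]
  rw [liftToCubic, map_sum, Finset.sum_congr rfl fun n _ => hterm n,
    Finset.sum_erase _ (by rw [h8, Polynomial.monomial_zero_right]),
    ← p.as_sum_range' 10 (by omega)]

end RestrictToCubic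

/-- **Nine points on `y = x³` cut out by another cubic (Claim 1.9.1a).**
Let `c₁, …, c₉ ∈ k` be pairwise distinct and `pᵢ = (cᵢ, cᵢ³)` the
corresponding points on the cubic `y − x³ = 0`.  The nine points are cut out
by another cubic (a polynomial of total degree `≤ 3` vanishing at all nine
points and not a scalar multiple of `y − x³`) iff `c₁ + ⋯ + c₉ = 0`. -/
theorem nine_points_on_cubic_cut_by_cubic
    {k : Type*} [Field k] (c : Fin 9 → k) (hc : Function.Injective c) :
    (∃ g₂ : MvPolynomial (Fin 2) k,
      g₂.totalDegree ≤ 3 ∧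
      (∀ i : Fin 9,
        MvPolynomial.eval (fun j : Fin 2 => if j = 0 then c i else (c i) ^ 3) g₂ = 0) ∧
      (∀ l : k, g₂ ≠ MvPolynomial.C l * (X 1 - (X 0) ^ 3))) ↔
    ∑ i : Fin 9, c i = 0 := by
  constructor
  · rintro ⟨g, hdeg, hvanish, hnotmul⟩
    have hne : restrictToCubic k g ≠ 0 := fun h0 =>
      let ⟨l, hl⟩ := exists_eq_C_mul_of_restrictToCubic_eq_zero hdeg h0
      hnotmul l hl
    have hroot : ∀ i, (restrictToCubic k g).IsRoot (c i) := fun i => by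
      rw [Polynomial.IsRoot, eval_restrictToCubic, hvanish i]
    exact Polynomial.sum_eq_zero_of_isRoot_of_coeff_card_pred_eq_zero hc hne
      (by simpa using natDegree_restrictToCubic_le hdeg) hroot
      (by simpa using coeff_eight_restrictToCubic hdeg)
  · intro hsum
    set P := ∏ i, (Polynomial.X - Polynomial.C (c i))
    have hmonic : P.Monic := Polynomial.monic_prod_of_monic _ _ fun i _ =>
      Polynomial.monic_X_sub_C (c i)
    have hdeg : P.natDegree = 9 := by simp [P]
    have h8 : P.coeff 8 = 0 := by
      simpa [hsum] using Polynomial.prod_X_sub_C_coeff_card_pred Finset.univ c (by simp)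
    have hP := restrictToCubic_liftToCubic hdeg.le h8
    refine ⟨liftToCubic P, totalDegree_liftToCubic_le P, fun i => ?_, fun l hl => ?_⟩
    · rw [← eval_restrictToCubic, hP, Polynomial.eval_prod]
      exact Finset.prod_eq_zero (Finset.mem_univ i) (by simp)
    · have hcubic : restrictToCubic k (X 1 - X 0 ^ 3) = 0 := by simp [restrictToCubic]
      rw [hl, map_mul, hcubic, mul_zero] at hP
      exact hmonic.ne_zero hP.symm
end
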